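/- arXiv:2106.14044 — 5 statements merged into one kernel-verified Lean document; each statement's English description precedes it below -/
import Mathlib

section
/- Let M = p_i^{n_i} p_j^{n_j} p_k^{n_k} with p_i, p_j, p_k distinct primes, and let A ⊕ B = ℤ_M. Let m = p_i^{α_i} p_j^{α_j} p_k^{α_k} and m′ = p_i^{α′_i} p_j^{α′_j} p_k^{α′_k} with 0 ≤ α_ι, α′_ι ≤ n_ι for each ι ∈ {i,j,k}. Assume at least one of m, m′ is different from M, and that for every ι ∈ {i,j,k} either α_ι ≠ α′_ι or α_ι = α′_ι = n_ι. Then for all x, y ∈ ℤ_M there is no quadruple (a, a′, b, b′) ∈ A × A × B × B with (a−x, M) = (b−y, M) = m and (a′−x, M) = (b′−y, M) = m′. -/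
open Polynomial

/-- The mask polynomial `A(X) = Σ_{a ∈ A} X^a` of a finite subset of `ZMod M`,
using the representatives in `{0, …, M-1}`. -/
noncomputable def maskPoly (M : ℕ) (A : Finset (ZMod M)) : Polynomial ℤ :=
  ∑ a ∈ A, X ^ a.val

/-- `Φ_s | A` : the `s`-th cyclotomic polynomial divides the mask polynomial of `A` in `ℤ[X]`. -/
def cycDvd (M s : ℕ) (A : Finset (ZMod M)) : Prop :=
  cyclotomic s ℤ ∣ maskPoly M A

/-- `A ⊕ B = ℤ_M` : every element of `ℤ_M` has a unique representation `a + b`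
with `a ∈ A` and `b ∈ B`. -/
def IsTiling (M : ℕ) (A B : Set (ZMod M)) : Prop :=
  ∀ z : ZMod M, ∃! ab : ZMod M × ZMod M, ab.1 ∈ A ∧ ab.2 ∈ B ∧ ab.1 + ab.2 = z

/-- The Coven–Meyerowitz property (T2): whenever `s_1, …, s_m` are prime powers dividing `M`,
powers of pairwise distinct primes, with `Φ_{s_t} | A` for each `t`, then `Φ_{s_1 ⋯ s_m} | A`. -/
def SatisfiesT2 (M : ℕ) (A : Finset (ZMod M)) : Prop :=
  ∀ (P : Finset ℕ) (e : ℕ → ℕ), P.Nonempty →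
    (∀ p ∈ P, p.Prime ∧ 1 ≤ e p ∧ p ^ e p ∣ M ∧ cycDvd M (p ^ e p) A) →
    cycDvd M (∏ p ∈ P, p ^ e p) A

/-- The `D`-grid through `x` in `ZMod M` : `Λ(x, D) = {y : D ∣ y - x}`. -/
def gridSet (M : ℕ) (x : ZMod M) (D : ℕ) : Set (ZMod M) :=
  {y : ZMod M | (D : ZMod M) ∣ (y - x)}

/-- `S` is fibered in the `p` direction on scale `M`: every element of `S` has its whole
fiber `Λ(s, M/p)` contained in `S`. -/
def Fibered (M p : ℕ) (S : Set (ZMod M)) : Prop :=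
  ∀ s ∈ S, gridSet M s (M / p) ⊆ S

/-- `Div_N(S)` : the set of values `(s - s', N) = gcd(s - s', N)` for `s, s' ∈ S`. -/
def DivSet (M N : ℕ) (S : Set (ZMod M)) : Set ℕ :=
  {m : ℕ | ∃ s ∈ S, ∃ s' ∈ S, Nat.gcd (s - s').val N = m}


def gam (a b n : ℕ) : ℕ := if a = b then n else min a b


/-- exponent of the difference -/

lemma gam_le {a b n : ℕ} (ha : a ≤ n) (hb : b ≤ n) : gam a b n ≤ n := by
  unfold gam; split_ifs; · rfl
  · exact le_trans (min_le_left _ _) ha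

lemma gam_lt {a b n : ℕ} (ha : a ≤ n) (hb : b ≤ n) (hab : a ≠ b) : gam a b n < n := by
  unfold gam; rw [if_neg hab]
  rcases Nat.lt_or_ge a b with h | h
  · exact lt_of_le_of_lt (min_le_left _ _) (lt_of_lt_of_le h hb)
  · rcases lt_or_eq_of_le h with h' | h'
    · exact lt_of_le_of_lt (min_le_right _ _) (lt_of_lt_of_le h' ha)
    · exact absurd h'.symm hab

lemma fact3 {p q r : ℕ} (hp : p.Prime) (hq : q.Prime) (hr : r.Prime)
    (hpq : p ≠ q) (hpr : p ≠ r) (hqr : q ≠ r) (x y z : ℕ) (w : ℕ) :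
    (p ^ x * q ^ y * r ^ z).factorization w =
      if w = p then x else if w = q then y else if w = r then z else 0 := by
  have h1 : p ^ x ≠ 0 := pow_ne_zero _ hp.pos.ne'
  have h2 : q ^ y ≠ 0 := pow_ne_zero _ hq.pos.ne'
  have h3 : r ^ z ≠ 0 := pow_ne_zero _ hr.pos.ne'
  rw [Nat.factorization_mul (mul_ne_zero h1 h2) h3,
    Nat.factorization_mul h1 h2,
    hp.factorization_pow, hq.factorization_pow, hr.factorization_pow]
  simp only [Finsupp.add_apply, Finsupp.single_apply]
  split_ifs with e1 e2 e3 <;> subst_vars <;> simp_all <;> omega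

lemma bridge (M : ℕ) [NeZero M] (r r' : ZMod M) :
    (M : ℤ) ∣ ((r - r').val : ℤ) - ((r.val : ℤ) - (r'.val : ℤ)) := by
  have h : ((((r - r').val : ℤ) - ((r.val : ℤ) - (r'.val : ℤ)) : ℤ) : ZMod M) = 0 := by
    push_cast
    simp [ZMod.natCast_val, ZMod.cast_id]
  exact (ZMod.intCast_zmod_eq_zero_iff_dvd _ _).mp h

lemma per_prime (M m m' : ℕ) [NeZero M] (p n α β : ℕ) (hp : p.Prime)
    (hMf : M.factorization p = n)
    (hmf : m.factorization p = α) (hm'f : m'.factorization p = β)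
    (hαn : α ≤ n) (hβn : β ≤ n)
    (hcond : α ≠ β ∨ (α = n ∧ β = n))
    (r r' : ZMod M) (hr : Nat.gcd r.val M = m) (hr' : Nat.gcd r'.val M = m') :
    ((p : ℤ) ^ (gam α β n) ∣ (r.val : ℤ) - (r'.val : ℤ)) ∧
      (gam α β n < n → ¬ (p ^ (gam α β n + 1) ∣ (r - r').val)) := by
  have hM0 : M ≠ 0 := NeZero.ne M
  have hm0 : m ≠ 0 := by
    intro h
    rw [h] at hr
    exact hM0 (Nat.eq_zero_of_gcd_eq_zero_right hr)
  have hm'0 : m' ≠ 0 := by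
    intro h
    rw [h] at hr'
    exact hM0 (Nat.eq_zero_of_gcd_eq_zero_right hr')
  have hmr : m ∣ r.val := hr ▸ Nat.gcd_dvd_left _ _
  have hm'r : m' ∣ r'.val := hr' ▸ Nat.gcd_dvd_left _ _
  have hpam : p ^ α ∣ m := (Nat.Prime.pow_dvd_iff_le_factorization hp hm0).mpr (le_of_eq hmf.symm)
  have hpbm : p ^ β ∣ m' :=
    (Nat.Prime.pow_dvd_iff_le_factorization hp hm'0).mpr (le_of_eq hm'f.symm)
  have hnm : ¬ p ^ (α + 1) ∣ m := by
    rw [Nat.Prime.pow_dvd_iff_le_factorization hp hm0, hmf]; omega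
  have hnm' : ¬ p ^ (β + 1) ∣ m' := by
    rw [Nat.Prime.pow_dvd_iff_le_factorization hp hm'0, hm'f]; omega
  have hpnM : p ^ n ∣ M := (Nat.Prime.pow_dvd_iff_le_factorization hp hM0).mpr (le_of_eq hMf.symm)
  constructor
  · by_cases hab : α = β
    · have hcond' : α = n ∧ β = n := by
        rcases hcond with h | h
        · exact absurd hab h
        · exact h
      have h1 : (p : ℤ) ^ n ∣ (r.val : ℤ) := by
        have : p ^ n ∣ r.val := dvd_trans (hcond'.1 ▸ hpam) hmr
        exact_mod_cast Int.natCast_dvd_natCast.mpr this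
      have h2 : (p : ℤ) ^ n ∣ (r'.val : ℤ) := by
        have : p ^ n ∣ r'.val := dvd_trans (hcond'.2 ▸ hpbm) hm'r
        exact_mod_cast Int.natCast_dvd_natCast.mpr this
      have : gam α β n = n := by unfold gam; rw [if_pos hab]
      rw [this]
      exact dvd_sub h1 h2
    · have hg : gam α β n = min α β := by unfold gam; rw [if_neg hab]
      rw [hg]
      have h1 : (p : ℤ) ^ (min α β) ∣ (r.val : ℤ) := by
        have : p ^ (min α β) ∣ r.val :=
          dvd_trans (dvd_trans (pow_dvd_pow p (min_le_left _ _)) hpam) hmr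
        exact_mod_cast Int.natCast_dvd_natCast.mpr this
      have h2 : (p : ℤ) ^ (min α β) ∣ (r'.val : ℤ) := by
        have : p ^ (min α β) ∣ r'.val :=
          dvd_trans (dvd_trans (pow_dvd_pow p (min_le_right _ _)) hpbm) hm'r
        exact_mod_cast Int.natCast_dvd_natCast.mpr this
      exact dvd_sub h1 h2
  · intro hlt hdvd
    set c := gam α β n with hc
    have hab : α ≠ β := by
      intro hab
      have : c = n := by rw [hc]; unfold gam; rw [if_pos hab]
      omega
    have hcmin : c = min α β := by rw [hc]; unfold gam; rw [if_neg hab]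
    -- p^(c+1) divides the integer difference r.val - r'.val
    have hdvdZ : (p : ℤ) ^ (c + 1) ∣ ((r - r').val : ℤ) := by
      exact_mod_cast Int.natCast_dvd_natCast.mpr hdvd
    have hpM : (p : ℤ) ^ (c + 1) ∣ (M : ℤ) := by
      have : p ^ (c + 1) ∣ M := dvd_trans (pow_dvd_pow p (by omega)) hpnM
      exact_mod_cast Int.natCast_dvd_natCast.mpr this
    have hdiff : (p : ℤ) ^ (c + 1) ∣ (r.val : ℤ) - (r'.val : ℤ) := by
      have hb := bridge M r r'
      have : (r.val : ℤ) - (r'.val : ℤ) =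
          ((r - r').val : ℤ) - (((r - r').val : ℤ) - ((r.val : ℤ) - (r'.val : ℤ))) := by ring
      rw [this]
      exact dvd_sub hdvdZ (dvd_trans hpM hb)
    rcases Nat.lt_or_ge α β with h | h
    · -- c = α, p^(α+1) ∣ m', hence ∣ r'.val, hence ∣ r.val, contradiction with hnm
      have hcα : c = α := by omega
      have h1 : p ^ (c + 1) ∣ r'.val := by
        refine dvd_trans ?_ hm'r
        refine dvd_trans (pow_dvd_pow p (by omega)) hpbm
      have h1' : (p : ℤ) ^ (c + 1) ∣ (r'.val : ℤ) := by
        exact_mod_cast Int.natCast_dvd_natCast.mpr h1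
      have h2 : (p : ℤ) ^ (c + 1) ∣ (r.val : ℤ) := by
        have : (r.val : ℤ) = ((r.val : ℤ) - (r'.val : ℤ)) + (r'.val : ℤ) := by ring
        rw [this]; exact dvd_add hdiff h1'
      have h3 : p ^ (c + 1) ∣ r.val := by exact_mod_cast h2
      have h4 : p ^ (c + 1) ∣ m := hr ▸ Nat.dvd_gcd h3 (dvd_trans (pow_dvd_pow p (by omega)) hpnM)
      exact hnm (hcα ▸ h4)
    · have hba : β < α := by omega
      have hcβ : c = β := by omega
      have h1 : p ^ (c + 1) ∣ r.val := by
        refine dvd_trans ?_ hmr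
        refine dvd_trans (pow_dvd_pow p (by omega)) hpam
      have h1' : (p : ℤ) ^ (c + 1) ∣ (r.val : ℤ) := by
        exact_mod_cast Int.natCast_dvd_natCast.mpr h1
      have h2 : (p : ℤ) ^ (c + 1) ∣ (r'.val : ℤ) := by
        have : (r'.val : ℤ) = (r.val : ℤ) - ((r.val : ℤ) - (r'.val : ℤ)) := by ring
        rw [this]; exact dvd_sub h1' hdiff
      have h3 : p ^ (c + 1) ∣ r'.val := by exact_mod_cast h2
      have h4 : p ^ (c + 1) ∣ m' :=
        hr' ▸ Nat.dvd_gcd h3 (dvd_trans (pow_dvd_pow p (by omega)) hpnM)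
      exact hnm' (hcβ ▸ h4)

lemma gcd_sub (pi pj pk : ℕ) (hpi : pi.Prime) (hpj : pj.Prime) (hpk : pk.Prime)
    (hij : pi ≠ pj) (hik : pi ≠ pk) (hjk : pj ≠ pk)
    (ni nj nk : ℕ)
    (M : ℕ) [NeZero M] (hM : M = pi ^ ni * pj ^ nj * pk ^ nk)
    (ai aj ak bi bj bk : ℕ)
    (hai : ai ≤ ni) (haj : aj ≤ nj) (hak : ak ≤ nk)
    (hbi : bi ≤ ni) (hbj : bj ≤ nj) (hbk : bk ≤ nk)
    (m m' : ℕ)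
    (hm : m = pi ^ ai * pj ^ aj * pk ^ ak)
    (hm' : m' = pi ^ bi * pj ^ bj * pk ^ bk)
    (hci : ai ≠ bi ∨ (ai = ni ∧ bi = ni))
    (hcj : aj ≠ bj ∨ (aj = nj ∧ bj = nj))
    (hck : ak ≠ bk ∨ (ak = nk ∧ bk = nk))
    (r r' : ZMod M) (hr : Nat.gcd r.val M = m) (hr' : Nat.gcd r'.val M = m') :
    Nat.gcd (r - r').val M = pi ^ (gam ai bi ni) * pj ^ (gam aj bj nj) * pk ^ (gam ak bk nk) := by
  have hM0 : M ≠ 0 := NeZero.ne M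
  set ci := gam ai bi ni with hcidef
  set cj := gam aj bj nj with hcjdef
  set ck := gam ak bk nk with hckdef
  set D := pi ^ ci * pj ^ cj * pk ^ ck with hD
  have hMfi : M.factorization pi = ni := by
    rw [hM, fact3 hpi hpj hpk hij hik hjk]; simp
  have hMfj : M.factorization pj = nj := by
    rw [hM, fact3 hpi hpj hpk hij hik hjk]; simp [Ne.symm hij]
  have hMfk : M.factorization pk = nk := by
    rw [hM, fact3 hpi hpj hpk hij hik hjk]; simp [Ne.symm hik, Ne.symm hjk]
  have hmfi : m.factorization pi = ai := by
    rw [hm, fact3 hpi hpj hpk hij hik hjk]; simp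
  have hmfj : m.factorization pj = aj := by
    rw [hm, fact3 hpi hpj hpk hij hik hjk]; simp [Ne.symm hij]
  have hmfk : m.factorization pk = ak := by
    rw [hm, fact3 hpi hpj hpk hij hik hjk]; simp [Ne.symm hik, Ne.symm hjk]
  have hm'fi : m'.factorization pi = bi := by
    rw [hm', fact3 hpi hpj hpk hij hik hjk]; simp
  have hm'fj : m'.factorization pj = bj := by
    rw [hm', fact3 hpi hpj hpk hij hik hjk]; simp [Ne.symm hij]
  have hm'fk : m'.factorization pk = bk := by
    rw [hm', fact3 hpi hpj hpk hij hik hjk]; simp [Ne.symm hik, Ne.symm hjk]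
  have Pi := per_prime M m m' pi ni ai bi hpi hMfi hmfi hm'fi hai hbi hci r r' hr hr'
  have Pj := per_prime M m m' pj nj aj bj hpj hMfj hmfj hm'fj haj hbj hcj r r' hr hr'
  have Pk := per_prime M m m' pk nk ak bk hpk hMfk hmfk hm'fk hak hbk hck r r' hr hr'
  set N := Nat.gcd (r - r').val M with hN
  have hN0 : N ≠ 0 := by
    intro h
    exact hM0 (Nat.eq_zero_of_gcd_eq_zero_right h)
  have hD0 : D ≠ 0 := by
    have := hpi.pos; have := hpj.pos; have := hpk.pos
    positivity
  have hcii : ci ≤ ni := gam_le hai hbi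
  have hcjj : cj ≤ nj := gam_le haj hbj
  have hckk : ck ≤ nk := gam_le hak hbk
  have hDM : D ∣ M := by
    rw [hD, hM]
    exact mul_dvd_mul (mul_dvd_mul (pow_dvd_pow _ hcii) (pow_dvd_pow _ hcjj))
      (pow_dvd_pow _ hckk)
  -- D divides (r - r').val
  have hDdvd : D ∣ (r - r').val := by
    have hij' : IsCoprime ((pi ^ ci : ℕ) : ℤ) ((pj ^ cj : ℕ) : ℤ) :=
      Nat.isCoprime_iff_coprime.mpr (((Nat.coprime_primes hpi hpj).mpr hij).pow _ _)
    have hik' : IsCoprime ((pi ^ ci * pj ^ cj : ℕ) : ℤ) ((pk ^ ck : ℕ) : ℤ) := by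
      have h1 : Nat.Coprime (pi ^ ci) (pk ^ ck) :=
        ((Nat.coprime_primes hpi hpk).mpr hik).pow _ _
      have h2 : Nat.Coprime (pj ^ cj) (pk ^ ck) :=
        ((Nat.coprime_primes hpj hpk).mpr hjk).pow _ _
      exact Nat.isCoprime_iff_coprime.mpr (Nat.Coprime.mul h1 h2)
    have d1 : ((pi ^ ci : ℕ) : ℤ) ∣ (r.val : ℤ) - (r'.val : ℤ) := by
      have := Pi.1; push_cast; push_cast at this; exact this
    have d2 : ((pj ^ cj : ℕ) : ℤ) ∣ (r.val : ℤ) - (r'.val : ℤ) := by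
      have := Pj.1; push_cast; push_cast at this; exact this
    have d3 : ((pk ^ ck : ℕ) : ℤ) ∣ (r.val : ℤ) - (r'.val : ℤ) := by
      have := Pk.1; push_cast; push_cast at this; exact this
    have d12 : ((pi ^ ci * pj ^ cj : ℕ) : ℤ) ∣ (r.val : ℤ) - (r'.val : ℤ) := by
      push_cast
      push_cast at hij'
      exact hij'.mul_dvd (by push_cast at d1; exact d1) (by push_cast at d2; exact d2)
    have dD : ((D : ℕ) : ℤ) ∣ (r.val : ℤ) - (r'.val : ℤ) := by
      rw [hD]
      push_cast
      push_cast at hik'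
      exact hik'.mul_dvd (by push_cast at d12; exact d12) (by push_cast at d3; exact d3)
    have hDZ : ((D : ℕ) : ℤ) ∣ ((r - r').val : ℤ) := by
      have hb := bridge M r r'
      have : ((r - r').val : ℤ) =
          (((r - r').val : ℤ) - ((r.val : ℤ) - (r'.val : ℤ))) + ((r.val : ℤ) - (r'.val : ℤ)) := by
        ring
      rw [this]
      exact dvd_add (dvd_trans (Int.natCast_dvd_natCast.mpr hDM) hb) dD
    exact_mod_cast hDZ
  have hDN : D ∣ N := Nat.dvd_gcd hDdvd hDM
  -- N divides D
  have hNM : N ∣ M := Nat.gcd_dvd_right _ _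
  have hNfle : N.factorization ≤ M.factorization :=
    (Nat.factorization_le_iff_dvd hN0 hM0).mpr hNM
  have hNval : N ∣ (r - r').val := Nat.gcd_dvd_left _ _
  have hDfi : D.factorization pi = ci := by
    rw [hD, fact3 hpi hpj hpk hij hik hjk]; simp
  have hDfj : D.factorization pj = cj := by
    rw [hD, fact3 hpi hpj hpk hij hik hjk]; simp [Ne.symm hij]
  have hDfk : D.factorization pk = ck := by
    rw [hD, fact3 hpi hpj hpk hij hik hjk]; simp [Ne.symm hik, Ne.symm hjk]
  have hND : N ∣ D := by
    rw [← Nat.factorization_le_iff_dvd hN0 hD0]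
    intro q
    by_cases hqi : q = pi
    · rw [hqi, hDfi]
      rcases eq_or_lt_of_le hcii with h | h
      · calc N.factorization pi ≤ M.factorization pi := hNfle pi
          _ = ni := hMfi
          _ = ci := h.symm
      · by_contra hcon
        push_neg at hcon
        have : pi ^ (ci + 1) ∣ N := by
          rw [Nat.Prime.pow_dvd_iff_le_factorization hpi hN0]; omega
        exact Pi.2 h (dvd_trans this hNval)
    · by_cases hqj : q = pj
      · rw [hqj, hDfj]
        rcases eq_or_lt_of_le hcjj with h | h
        · calc N.factorization pj ≤ M.factorization pj := hNfle pj
            _ = nj := hMfj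
            _ = cj := h.symm
        · by_contra hcon
          push_neg at hcon
          have : pj ^ (cj + 1) ∣ N := by
            rw [Nat.Prime.pow_dvd_iff_le_factorization hpj hN0]; omega
          exact Pj.2 h (dvd_trans this hNval)
      · by_cases hqk : q = pk
        · rw [hqk, hDfk]
          rcases eq_or_lt_of_le hckk with h | h
          · calc N.factorization pk ≤ M.factorization pk := hNfle pk
              _ = nk := hMfk
              _ = ck := h.symm
          · by_contra hcon
            push_neg at hcon
            have : pk ^ (ck + 1) ∣ N := by
              rw [Nat.Prime.pow_dvd_iff_le_factorization hpk hN0]; omega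
            exact Pk.2 h (dvd_trans this hNval)
        · have hMq : M.factorization q = 0 := by
            rw [hM, fact3 hpi hpj hpk hij hik hjk, if_neg hqi, if_neg hqj, if_neg hqk]
          calc N.factorization q ≤ M.factorization q := hNfle q
            _ = 0 := hMq
            _ ≤ D.factorization q := Nat.zero_le _
  exact Nat.dvd_antisymm hND hDN

lemma exists_unit_mul (M d : ℕ) [NeZero M] (hd : d ∣ M) (x : ZMod M)
    (hx : Nat.gcd x.val M = d) : ∃ u : (ZMod M)ˣ, x = (d : ZMod M) * u := by
  have hM0 : M ≠ 0 := NeZero.ne M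
  have hd0 : d ≠ 0 := by
    intro h; rw [h] at hd; exact hM0 (zero_dvd_iff.mp hd)
  set e := M / d with he
  have hde : d * e = M := Nat.mul_div_cancel' hd
  have he0 : e ≠ 0 := by
    intro h; rw [h, Nat.mul_zero] at hde; exact hM0 hde.symm
  have hdx : d ∣ x.val := hx ▸ Nat.gcd_dvd_left _ _
  set g1 := x.val / d with hg1
  have hxval : x.val = d * g1 := (Nat.mul_div_cancel' hdx).symm
  have hcop : Nat.Coprime g1 e := by
    have : d * Nat.gcd g1 e = d := by
      rw [← Nat.gcd_mul_left, ← hxval, hde, hx]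
    have := Nat.eq_of_mul_eq_mul_left (Nat.pos_of_ne_zero hd0) (this.trans (mul_one d).symm)
    exact this
  have heM : e ∣ M := Dvd.intro_left d hde
  obtain ⟨Γ, hΓ⟩ := ZMod.unitsMap_surjective heM (ZMod.unitOfCoprime g1 hcop)
  refine ⟨Γ, ?_⟩
  have hcast : ((Γ : ZMod M).val : ZMod e) = (g1 : ZMod e) := by
    have h1 : ((ZMod.unitsMap heM Γ : (ZMod e)ˣ) : ZMod e) = (g1 : ZMod e) := by
      rw [hΓ, ZMod.coe_unitOfCoprime]
    rw [ZMod.unitsMap] at h1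
    simp only [Units.coe_map, MonoidHom.coe_coe] at h1
    rwa [ZMod.castHom_apply, ← ZMod.natCast_val] at h1
  have hmod : (Γ : ZMod M).val ≡ g1 [MOD e] := (ZMod.natCast_eq_natCast_iff _ _ _).mp hcast
  have hmod2 : d * (Γ : ZMod M).val ≡ d * g1 [MOD d * e] := hmod.mul_left' d
  rw [hde, ← hxval] at hmod2
  have : ((d * (Γ : ZMod M).val : ℕ) : ZMod M) = ((x.val : ℕ) : ZMod M) :=
    (ZMod.natCast_eq_natCast_iff _ _ _).mpr hmod2
  push_cast at this
  rw [ZMod.natCast_val, ZMod.natCast_val, ZMod.cast_id, ZMod.cast_id] at this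
  exact this.symm

noncomputable def pQ (M : ℕ) (F : Finset (ZMod M)) : ℚ[X] := ∑ a ∈ F, X ^ a.val


lemma eval_one_pQ (M : ℕ) (F : Finset (ZMod M)) : Polynomial.eval 1 (pQ M F) = F.card := by
  rw [pQ, Polynomial.eval_finset_sum]
  simp

lemma P1 (M j : ℕ) : (X ^ M - 1 : ℚ[X]) ∣ X ^ j - X ^ (j % M) := by
  have hq : j = M * (j / M) + j % M := (Nat.div_add_mod j M).symm
  have h2 : (X ^ j - X ^ (j % M) : ℚ[X]) = ((X ^ M) ^ (j / M) - 1) * X ^ (j % M) := by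
    rw [sub_mul, ← pow_mul, one_mul, ← pow_add, ← hq]
  rw [h2]
  have h3 : (X ^ M - 1 : ℚ[X]) ∣ (X ^ M) ^ (j / M) - 1 := by
    have := sub_dvd_pow_sub_pow (X ^ M : ℚ[X]) 1 (j / M)
    simpa using this
  exact h3.mul_right _

lemma P2 (M : ℕ) [NeZero M] (F G : Finset (ZMod M)) :
    (X ^ M - 1 : ℚ[X]) ∣ pQ M F * pQ M G - ∑ p ∈ F ×ˢ G, X ^ ((p.1 + p.2).val) := by
  rw [pQ, pQ, Finset.sum_mul_sum]
  rw [← Finset.sum_product']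
  rw [← Finset.sum_sub_distrib]
  apply Finset.dvd_sum
  intro p _
  rw [← pow_add]
  rw [ZMod.val_add p.1 p.2]
  exact P1 M _

lemma P3 (M : ℕ) [NeZero M] (A B : Set (ZMod M)) (htile : (∀ z : ZMod M, ∃! ab : ZMod M × ZMod M, ab.1 ∈ A ∧ ab.2 ∈ B ∧ ab.1 + ab.2 = z))
    (finA finB : Finset (ZMod M)) (hA : ∀ z, z ∈ finA ↔ z ∈ A) (hB : ∀ z, z ∈ finB ↔ z ∈ B) :
    ∑ p ∈ finA ×ˢ finB, (X : ℚ[X]) ^ ((p.1 + p.2).val) = ∑ i ∈ Finset.range M, X ^ i := by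
  have step1 : ∑ p ∈ finA ×ˢ finB, (X : ℚ[X]) ^ ((p.1 + p.2).val)
      = ∑ z ∈ Finset.univ, (X : ℚ[X]) ^ (z : ZMod M).val := by
    apply Finset.sum_bij (i := fun p _ => p.1 + p.2)
    · intro a _; exact Finset.mem_univ _
    · intro p hp q hq hpq
      rw [Finset.mem_product] at hp hq
      have h1 : (p.1 ∈ A ∧ p.2 ∈ B ∧ p.1 + p.2 = p.1 + p.2) :=
        ⟨(hA _).mp hp.1, (hB _).mp hp.2, rfl⟩
      have h2 : (q.1 ∈ A ∧ q.2 ∈ B ∧ q.1 + q.2 = p.1 + p.2) :=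
        ⟨(hA _).mp hq.1, (hB _).mp hq.2, hpq.symm⟩
      have := (htile (p.1 + p.2)).unique h1 h2
      exact Prod.ext (congrArg Prod.fst this) (congrArg Prod.snd this)
    · intro z _
      obtain ⟨ab, ⟨hab1, hab2, hab3⟩, _⟩ := htile z
      exact ⟨ab, Finset.mem_product.mpr ⟨(hA _).mpr hab1, (hB _).mpr hab2⟩, hab3⟩
    · intro a _; rfl
  rw [step1]
  apply Finset.sum_bij (i := fun z _ => (z : ZMod M).val)
  · intro z _; exact Finset.mem_range.mpr (ZMod.val_lt z)
  · intro z _ w _ h; exact ZMod.val_injective _ h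
  · intro i hi
    refine ⟨(i : ZMod M), Finset.mem_univ _, ?_⟩
    exact ZMod.val_cast_of_lt (Finset.mem_range.mp hi)
  · intro a _; rfl

lemma pow_mod_eq {z : ℂ} (N j : ℕ) (hz : z ^ N = 1) : z ^ (j % N) = z ^ j := by
  conv_rhs => rw [← Nat.div_add_mod j N]
  rw [pow_add, pow_mul, hz, one_pow, one_mul]

lemma galois (M d : ℕ) [NeZero M] (hd : d ∣ M) (hd0 : 0 < d) (F : Finset (ZMod M))
    (u : (ZMod M)ˣ) (h : cyclotomic d ℚ ∣ pQ M F) :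
    cyclotomic d ℚ ∣ pQ M (F.image (fun b => (u : ZMod M) * b)) := by
  by_contra hnot
  have hirr : Irreducible (cyclotomic d ℚ) := cyclotomic.irreducible_rat hd0
  have hcop : IsCoprime (cyclotomic d ℚ) (pQ M (F.image (fun b => (u : ZMod M) * b))) :=
    (hirr.coprime_iff_not_dvd).mpr hnot
  set ζ : ℂ := Complex.exp (2 * Real.pi * Complex.I / d) with hζdef
  have hζ : IsPrimitiveRoot ζ d := Complex.isPrimitiveRoot_exp d hd0.ne'
  have hζ1 : ζ ^ d = 1 := hζ.pow_eq_one
  have hζM : ζ ^ M = 1 := by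
    obtain ⟨c, hc⟩ := hd
    rw [hc, pow_mul, hζ1, one_pow]
  set w := ((u : ZMod M)).val with hw
  have hwM : Nat.Coprime w M := ZMod.val_coe_unit_coprime u
  have hwd : Nat.Coprime w d := Nat.Coprime.coprime_dvd_right hd hwM
  have hζw : IsPrimitiveRoot (ζ ^ w) d := hζ.pow_of_coprime w hwd
  have keyroot : ∀ (z : ℂ), IsPrimitiveRoot z d → aeval z (cyclotomic d ℚ) = 0 := by
    intro z hz
    rw [aeval_def, ← eval_map, map_cyclotomic]
    exact hz.isRoot_cyclotomic hd0
  have key : ∀ P : ℚ[X], cyclotomic d ℚ ∣ P → ∀ (z : ℂ), IsPrimitiveRoot z d →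
      aeval z P = 0 := by
    intro P hP z hz
    obtain ⟨Q, rfl⟩ := hP
    rw [map_mul, keyroot z hz, zero_mul]
  have hinj : Set.InjOn (fun b => (u : ZMod M) * b) F := by
    intro x _ y _ hxy
    simpa using congrArg (fun t => ((u⁻¹ : (ZMod M)ˣ) : ZMod M) * t) hxy
  have h1 : aeval ζ (pQ M (F.image (fun b => (u : ZMod M) * b))) = 0 := by
    rw [pQ, Finset.sum_image hinj, map_sum]
    have hterm : ∀ b ∈ F, aeval ζ ((X : ℚ[X]) ^ (((u : ZMod M) * b).val)) = (ζ ^ w) ^ b.val := by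
      intro b _
      rw [map_pow, aeval_X, ZMod.val_mul, pow_mod_eq M _ hζM, ← hw, pow_mul]
    rw [Finset.sum_congr rfl hterm]
    have : ∑ b ∈ F, (ζ ^ w) ^ b.val = aeval (ζ ^ w) (pQ M F) := by
      rw [pQ, map_sum]
      apply Finset.sum_congr rfl
      intro b _
      rw [map_pow, aeval_X]
    rw [this]
    exact key _ h _ hζw
  have h2 : aeval ζ (cyclotomic d ℚ) = 0 := keyroot ζ hζ
  have hmap := hcop.map (aeval ζ : ℚ[X] →ₐ[ℚ] ℂ).toRingHom
  simp only [AlgHom.toRingHom_eq_coe, RingHom.coe_coe] at hmap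
  rw [h1, h2] at hmap
  have : IsUnit (0 : ℂ) := isCoprime_zero_left.mp hmap
  simp at this

lemma transfer (M : ℕ) [NeZero M] (FA FB : Finset (ZMod M)) (u : (ZMod M)ˣ)
    (h : (X ^ M - 1 : ℚ[X]) ∣ pQ M FA * pQ M FB - ∑ i ∈ Finset.range M, X ^ i) :
    (X ^ M - 1 : ℚ[X]) ∣
      pQ M FA * pQ M (FB.image (fun b => (u : ZMod M) * b)) - ∑ i ∈ Finset.range M, X ^ i := by
  have hM : 0 < M := NeZero.pos M
  set FB' := FB.image (fun b => (u : ZMod M) * b) with hFB'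
  set Dq : ℚ[X] := ∑ i ∈ Finset.range M, X ^ i with hDqdef
  have hfact : ∏ d ∈ M.divisors, cyclotomic d ℚ = X ^ M - 1 :=
    prod_cyclotomic_eq_X_pow_sub_one hM ℚ
  have h1mem : 1 ∈ M.divisors := Nat.one_mem_divisors.mpr hM.ne'
  have hprod : cyclotomic 1 ℚ * ∏ d ∈ M.divisors.erase 1, cyclotomic d ℚ = X ^ M - 1 := by
    rw [show M.divisors = insert 1 (M.divisors.erase 1) from (Finset.insert_erase h1mem).symm,
      Finset.prod_insert (Finset.notMem_erase 1 M.divisors)] at hfact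
    exact hfact
  have hXne : (X - 1 : ℚ[X]) ≠ 0 := by
    intro hcon
    have := congrArg natDegree hcon
    rw [show (1 : ℚ[X]) = C 1 by simp, natDegree_X_sub_C] at this
    simp at this
  have hDq : Dq = ∏ d ∈ M.divisors.erase 1, cyclotomic d ℚ := by
    apply mul_left_cancel₀ hXne
    rw [show (X - 1 : ℚ[X]) * Dq = Dq * (X - 1) from mul_comm _ _, hDqdef, geom_sum_mul,
      ← hprod, cyclotomic_one]
  rw [← hfact]
  apply Finset.prod_dvd_of_coprime
  · intro i hi j hj hij
    exact cyclotomic.isCoprime_rat hij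
  · intro d hd
    have hddvd : d ∣ M := Nat.dvd_of_mem_divisors hd
    have hd0 : 0 < d := Nat.pos_of_mem_divisors hd
    have hdXM : cyclotomic d ℚ ∣ (X ^ M - 1 : ℚ[X]) := hfact ▸ Finset.dvd_prod_of_mem _ hd
    have hdiff : cyclotomic d ℚ ∣ pQ M FA * pQ M FB - Dq := hdXM.trans h
    by_cases h1 : d = 1
    · subst h1
      rw [cyclotomic_one]
      have hC : (X - 1 : ℚ[X]) = X - C 1 := by simp
      rw [hC, dvd_iff_isRoot]
      have hroot : Polynomial.eval 1 (pQ M FA * pQ M FB - Dq) = 0 := by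
        have : (X - C 1 : ℚ[X]) ∣ pQ M FA * pQ M FB - Dq := by
          rw [← hC, ← cyclotomic_one ℚ]; exact hdiff
        exact (dvd_iff_isRoot.mp this)
      rw [IsRoot.def] at *
      rw [eval_sub, eval_mul, eval_one_pQ, eval_one_pQ] at hroot ⊢
      rw [show (FB'.card : ℚ) = FB.card by
        rw [hFB', Finset.card_image_of_injective _ (fun x y hxy => by
          simpa using congrArg (fun t => ((u⁻¹ : (ZMod M)ˣ) : ZMod M) * t) hxy)]]
      exact hroot
    · have hmem : d ∈ M.divisors.erase 1 := Finset.mem_erase.mpr ⟨h1, hd⟩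
      have hdD : cyclotomic d ℚ ∣ Dq := hDq ▸ Finset.dvd_prod_of_mem _ hmem
      have hAB : cyclotomic d ℚ ∣ pQ M FA * pQ M FB := by
        have : pQ M FA * pQ M FB = (pQ M FA * pQ M FB - Dq) + Dq := by ring
        rw [this]
        exact dvd_add hdiff hdD
      have hprime : Prime (cyclotomic d ℚ) := (cyclotomic.irreducible_rat hd0).prime
      rcases hprime.2.2 _ _ hAB with hA | hB
      · exact dvd_sub (hA.mul_right _) hdD
      · exact dvd_sub ((galois M d hddvd hd0 FB u hB).mul_left _) hdD


lemma key (M : ℕ) [NeZero M] (A B : Set (ZMod M)) (htile : IsTiling M A B)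
    (u : (ZMod M)ˣ) (a a' b b' : ZMod M)
    (ha : a ∈ A) (ha' : a' ∈ A) (hb : b ∈ B) (hb' : b' ∈ B)
    (hne : a ≠ a') (hrel : a - a' = (u : ZMod M) * (b - b')) : False := by
  classical
  have hM : 0 < M := NeZero.pos M
  set finA := A.toFinite.toFinset with hfinA
  set finB := B.toFinite.toFinset with hfinB
  have hAmem : ∀ z, z ∈ finA ↔ z ∈ A := fun z => Set.Finite.mem_toFinset _
  have hBmem : ∀ z, z ∈ finB ↔ z ∈ B := fun z => Set.Finite.mem_toFinset _
  set Dq : ℚ[X] := ∑ i ∈ Finset.range M, X ^ i with hDq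
  have hAB : (X ^ M - 1 : ℚ[X]) ∣ pQ M finA * pQ M finB - Dq := by
    have := P2 M finA finB
    rwa [P3 M A B htile finA finB hAmem hBmem] at this
  have hAB' := transfer M finA finB u hAB
  set finB' := finB.image (fun b => (u : ZMod M) * b) with hfinB'
  set E : ℚ[X] := ∑ p ∈ finA ×ˢ finB', X ^ ((p.1 + p.2).val) with hE
  have hdvdE : (X ^ M - 1 : ℚ[X]) ∣ E - Dq := by
    have h2 := P2 M finA finB'
    have : E - Dq = (pQ M finA * pQ M finB' - Dq) - (pQ M finA * pQ M finB' - E) := by ring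
    rw [this]
    exact dvd_sub hAB' h2
  -- degree bounds
  have hdegE : (E - Dq).degree < (M : WithBot ℕ) := by
    have hE' : E.degree < (M : WithBot ℕ) := by
      apply lt_of_le_of_lt (Polynomial.degree_sum_le _ _)
      rw [Finset.sup_lt_iff (by exact_mod_cast WithBot.bot_lt_coe M)]
      intro p _
      rw [degree_X_pow]
      exact_mod_cast WithBot.coe_lt_coe.mpr ((p.1 + p.2).val_lt)
    have hD' : Dq.degree < (M : WithBot ℕ) := by
      apply lt_of_le_of_lt (Polynomial.degree_sum_le _ _)
      rw [Finset.sup_lt_iff (by exact_mod_cast WithBot.bot_lt_coe M)]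
      intro i hi
      rw [degree_X_pow]
      exact_mod_cast WithBot.coe_lt_coe.mpr (Finset.mem_range.mp hi)
    apply lt_of_le_of_lt (Polynomial.degree_sub_le _ _)
    exact max_lt hE' hD'
  have hEDq : E = Dq := by
    have hdeg : (X ^ M - 1 : ℚ[X]).degree = M := by
      have : (X ^ M - 1 : ℚ[X]) = X ^ M - C 1 := by simp
      rw [this, degree_X_pow_sub_C hM]
    have := Polynomial.eq_zero_of_dvd_of_degree_lt hdvdE (by rw [hdeg]; exact hdegE)
    exact sub_eq_zero.mp this
  -- coefficient extraction
  set z₀ := a + (u : ZMod M) * b' with hz₀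
  set k := z₀.val with hk
  have hcoeffD : Dq.coeff k = 1 := by
    rw [hDq, Polynomial.finset_sum_coeff]
    have : ∀ i ∈ Finset.range M, ((X : ℚ[X]) ^ i).coeff k = if i = k then 1 else 0 := by
      intro i _; rw [Polynomial.coeff_X_pow]; exact if_congr eq_comm rfl rfl
    rw [Finset.sum_congr rfl this, Finset.sum_ite_eq' (Finset.range M) k (fun _ => (1:ℚ))]
    rw [if_pos (Finset.mem_range.mpr (ZMod.val_lt z₀))]
  have hcoeffE : E.coeff k = ((finA ×ˢ finB').filter (fun p => (p.1 + p.2).val = k)).card := by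
    rw [hE, Polynomial.finset_sum_coeff]
    have : ∀ p ∈ finA ×ˢ finB', ((X : ℚ[X]) ^ ((p.1 + p.2).val)).coeff k
        = if (p.1 + p.2).val = k then 1 else 0 := by
      intro p _; rw [Polynomial.coeff_X_pow]; exact if_congr eq_comm rfl rfl
    rw [Finset.sum_congr rfl this, Finset.sum_boole]
  have hcard : ((finA ×ˢ finB').filter (fun p => (p.1 + p.2).val = k)).card = 1 := by
    have := congrArg (fun P => Polynomial.coeff P k) hEDq
    rw [hcoeffE, hcoeffD] at this
    exact_mod_cast this
  -- two distinct elements in the filter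
  set P1 : ZMod M × ZMod M := (a, (u : ZMod M) * b') with hP1
  set P2' : ZMod M × ZMod M := (a', (u : ZMod M) * b) with hP2
  have hsum : a' + (u : ZMod M) * b = z₀ := by
    rw [hz₀]
    have : a - a' = (u : ZMod M) * b - (u : ZMod M) * b' := by
      rw [hrel, mul_sub]
    linear_combination -this
  have hP1mem : P1 ∈ (finA ×ˢ finB').filter (fun p => (p.1 + p.2).val = k) := by
    rw [Finset.mem_filter, Finset.mem_product]
    refine ⟨⟨(hAmem _).mpr ha, ?_⟩, rfl⟩
    rw [hfinB', Finset.mem_image]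
    exact ⟨b', (hBmem _).mpr hb', rfl⟩
  have hP2mem : P2' ∈ (finA ×ˢ finB').filter (fun p => (p.1 + p.2).val = k) := by
    rw [Finset.mem_filter, Finset.mem_product]
    refine ⟨⟨(hAmem _).mpr ha', ?_⟩, ?_⟩
    · rw [hfinB', Finset.mem_image]
      exact ⟨b, (hBmem _).mpr hb, rfl⟩
    · show (a' + (u : ZMod M) * b).val = k
      rw [hsum]
  have hPne : P1 ≠ P2' := by
    intro hcon
    exact hne (congrArg Prod.fst hcon)
  have : 2 ≤ ((finA ×ˢ finB').filter (fun p => (p.1 + p.2).val = k)).card := by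
    have hsub : {P1, P2'} ⊆ (finA ×ˢ finB').filter (fun p => (p.1 + p.2).val = k) := by
      intro x hx
      rcases Finset.mem_insert.mp hx with h | h
      · rw [h]; exact hP1mem
      · rw [Finset.mem_singleton.mp h]; exact hP2mem
    calc 2 = ({P1, P2'} : Finset (ZMod M × ZMod M)).card := (Finset.card_pair hPne).symm
      _ ≤ _ := Finset.card_le_card hsub
  omega

/-- **Enhanced divisor exclusion.** Let `M = p_i^{n_i} p_j^{n_j} p_k^{n_k}` and
`A ⊕ B = ℤ_M`. If `m = p_i^{α_i} p_j^{α_j} p_k^{α_k}` and `m' = p_i^{β_i} p_j^{β_j} p_k^{β_k}`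
with exponents at most the `n`'s, not both equal to `M`, and for each index either the
exponents differ or both are maximal, then there is no configuration
`(a, a', b, b') ∈ A × A × B × B` with `(a-x, M) = (b-y, M) = m`, `(a'-x, M) = (b'-y, M) = m'`. -/
theorem statement4
    (pi pj pk : ℕ) (hpi : pi.Prime) (hpj : pj.Prime) (hpk : pk.Prime)
    (hij : pi ≠ pj) (hik : pi ≠ pk) (hjk : pj ≠ pk)
    (ni nj nk : ℕ) (hni : 1 ≤ ni) (hnj : 1 ≤ nj) (hnk : 1 ≤ nk)
    (M : ℕ) (hM : M = pi ^ ni * pj ^ nj * pk ^ nk)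
    (A B : Set (ZMod M)) (htile : IsTiling M A B)
    (ai aj ak bi bj bk : ℕ)
    (hai : ai ≤ ni) (haj : aj ≤ nj) (hak : ak ≤ nk)
    (hbi : bi ≤ ni) (hbj : bj ≤ nj) (hbk : bk ≤ nk)
    (m m' : ℕ)
    (hm : m = pi ^ ai * pj ^ aj * pk ^ ak)
    (hm' : m' = pi ^ bi * pj ^ bj * pk ^ bk)
    (hneM : m ≠ M ∨ m' ≠ M)
    (hci : ai ≠ bi ∨ (ai = ni ∧ bi = ni))
    (hcj : aj ≠ bj ∨ (aj = nj ∧ bj = nj))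
    (hck : ak ≠ bk ∨ (ak = nk ∧ bk = nk)) :
    ∀ x y : ZMod M, ¬ ∃ a ∈ A, ∃ a' ∈ A, ∃ b ∈ B, ∃ b' ∈ B,
      Nat.gcd (a - x).val M = m ∧ Nat.gcd (b - y).val M = m ∧
      Nat.gcd (a' - x).val M = m' ∧ Nat.gcd (b' - y).val M = m' := by
  intro x y
  rintro ⟨a, haA, a', ha'A, b, hbB, b', hb'B, h1, h2, h3, h4⟩
  haveI : NeZero M := ⟨by
    rw [hM]
    exact (Nat.mul_pos (Nat.mul_pos (pow_pos hpi.pos _) (pow_pos hpj.pos _))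
      (pow_pos hpk.pos _)).ne'⟩
  have hm0 : m ≠ 0 := by
    rw [hm]
    exact (Nat.mul_pos (Nat.mul_pos (pow_pos hpi.pos _) (pow_pos hpj.pos _))
      (pow_pos hpk.pos _)).ne'
  have hm'0 : m' ≠ 0 := by
    rw [hm']
    exact (Nat.mul_pos (Nat.mul_pos (pow_pos hpi.pos _) (pow_pos hpj.pos _))
      (pow_pos hpk.pos _)).ne'
  -- m ≠ m'
  have hmm' : m ≠ m' := by
    intro he
    have hfi : ai = bi := by
      have e1 : m.factorization pi = ai := by
        rw [hm, fact3 hpi hpj hpk hij hik hjk]; simp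
      have e2 : m'.factorization pi = bi := by
        rw [hm', fact3 hpi hpj hpk hij hik hjk]; simp
      rw [← e1, ← e2, he]
    have hfj : aj = bj := by
      have e1 : m.factorization pj = aj := by
        rw [hm, fact3 hpi hpj hpk hij hik hjk]; simp [Ne.symm hij]
      have e2 : m'.factorization pj = bj := by
        rw [hm', fact3 hpi hpj hpk hij hik hjk]; simp [Ne.symm hij]
      rw [← e1, ← e2, he]
    have hfk : ak = bk := by
      have e1 : m.factorization pk = ak := by
        rw [hm, fact3 hpi hpj hpk hij hik hjk]; simp [Ne.symm hik, Ne.symm hjk]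
      have e2 : m'.factorization pk = bk := by
        rw [hm', fact3 hpi hpj hpk hij hik hjk]; simp [Ne.symm hik, Ne.symm hjk]
      rw [← e1, ← e2, he]
    have hi' : ai = ni := ((hci.resolve_left (by simp [hfi])).1)
    have hj' : aj = nj := ((hcj.resolve_left (by simp [hfj])).1)
    have hk' : ak = nk := ((hck.resolve_left (by simp [hfk])).1)
    have : m = M := by rw [hm, hM, hi', hj', hk']
    rcases hneM with h | h
    · exact h this
    · exact h (by rw [← he, this])
  -- a ≠ a' and b ≠ b'
  have hnea : a ≠ a' := by
    intro he
    rw [he] at h1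
    exact hmm' (h1.symm.trans h3)
  -- the common gcd D
  have gA := gcd_sub pi pj pk hpi hpj hpk hij hik hjk ni nj nk M hM ai aj ak bi bj bk
    hai haj hak hbi hbj hbk m m' hm hm' hci hcj hck (a - x) (a' - x) h1 h3
  have gB := gcd_sub pi pj pk hpi hpj hpk hij hik hjk ni nj nk M hM ai aj ak bi bj bk
    hai haj hak hbi hbj hbk m m' hm hm' hci hcj hck (b - y) (b' - y) h2 h4
  rw [sub_sub_sub_cancel_right] at gA gB
  set D : ℕ := pi ^ (gam ai bi ni) * pj ^ (gam aj bj nj) * pk ^ (gam ak bk nk) with hD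
  have hDM : D ∣ M := by
    rw [hD, hM]
    exact mul_dvd_mul (mul_dvd_mul (pow_dvd_pow _ (gam_le hai hbi))
      (pow_dvd_pow _ (gam_le haj hbj))) (pow_dvd_pow _ (gam_le hak hbk))
  obtain ⟨ΓA, hΓA⟩ := exists_unit_mul M D hDM (a - a') gA
  obtain ⟨ΓB, hΓB⟩ := exists_unit_mul M D hDM (b - b') gB
  set u : (ZMod M)ˣ := ΓA * ΓB⁻¹ with hu
  have hrel : a - a' = (u : ZMod M) * (b - b') := by
    rw [hΓA, hΓB, hu, Units.val_mul]
    have : (↑ΓA : ZMod M) * ↑ΓB⁻¹ * ((D : ZMod M) * ↑ΓB)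
        = (D : ZMod M) * (↑ΓA * (↑ΓB⁻¹ * ↑ΓB)) := by ring
    rw [this, ΓB.inv_mul, mul_one]
  exact key M A B htile u a a' b b' haA ha'A hbB hb'B hnea hrel
end

section
/- Let M = p_i^{n_i} p_j^{n_j} p_k^{n_k} with p_i, p_j, p_k distinct primes. Assume A ⊕ B = ℤ_M and |A| = p_i^{β_i} p_j^{β_j} p_k^{β_k}. Then for every x ∈ ℤ_M and every integer 0 ≤ α_i ≤ n_i one has |A ∩ Π(x, p_i^{n_i−α_i})| ≤ p_i^{α_i} p_j^{β_j} p_k^{β_k}. -/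
open Polynomial

/-!
Reduce modulo `D = p_i ^ (n_i - α_i)`: if `f_A n` counts the `a ∈ A` with `a ≡ n (mod D)`, the
plane `Π(x, D)` meets `A` in `f_A (x mod D)` points. The tiling gives `A(ζ) B(ζ) = 0` at every
root of unity `ζ ≠ 1` of order dividing `M`, hence, by Galois conjugacy, for each
`1 ≤ t ≤ n_i - α_i` the fibre sums of `A` or those of `B` vanish at all primitive `p_i ^ t`-th
roots of unity. Splitting `n` by its residue mod `p`, vanishing at the primitive `p`-th roots
makes all residue classes carry the same mass, and vanishing at the primitive `p ^ (t + 1)`-th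
roots passes to vanishing at the primitive `p ^ t`-th roots on each class. By induction, if this
happens for `s` exponents on the side of `A` and for `n_i - α_i - s` on the side of `B`, then
`p_i ^ s * f_A n ≤ |A|` and `p_i ^ (n_i - α_i - s) ∣ |B|`. As `|A| |B| = M`, the latter forces
`s ≥ β_i - α_i`, and the former is the bound.
-/

open Finset

theorem Finset.sum_range_mul_eq_sum_sum_mul_add {M : Type*} [AddCommMonoid M] (N p : ℕ)
    (h : ℕ → M) :
    ∑ n ∈ range (N * p), h n = ∑ r ∈ range p, ∑ q ∈ range N, h (p * q + r) := by
  rw [sum_range, ← finProdFinEquiv.sum_comp, Fintype.sum_prod_type, sum_comm]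
  simp only [sum_range, finProdFinEquiv_apply_val]
  exact sum_congr rfl fun r _ => sum_congr rfl fun q _ => by rw [add_comm]

theorem Finset.sum_pow_eq_sum_card_filter_mod {α R : Type*} [CommSemiring R] (s : Finset α)
    (v : α → ℕ) {D : ℕ} (hD : 0 < D) {ζ : R} (hζ : ζ ^ D = 1) :
    ∑ a ∈ s, ζ ^ v a = ∑ n ∈ range D, (#{a ∈ s | v a % D = n} : R) * ζ ^ n := by
  rw [← sum_fiberwise_of_maps_to (g := fun a => v a % D) (t := range D)
    (fun a _ => mem_range.mpr (Nat.mod_lt _ hD))]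
  refine sum_congr rfl fun n _ => ?_
  rw [sum_congr rfl fun a ha => by rw [pow_eq_pow_mod _ hζ, (mem_filter.mp ha).2], sum_const,
    nsmul_eq_mul]

theorem Finset.exists_shift_of_subset_Icc {S : Finset ℕ} {m : ℕ} (hS : S ⊆ Icc 1 (m + 1)) :
    ∃ S' ⊆ Icc 1 m, (∀ t ∈ S', t + 1 ∈ S) ∧ #S = #S' + if 1 ∈ S then 1 else 0 := by
  set S' := (Icc 1 m).filter (· + 1 ∈ S)
  have hshift : S.erase 1 = S'.map (addRightEmbedding 1) := by
    ext t
    have hSt := @hS t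
    simp only [mem_erase, mem_map, mem_filter, mem_Icc, addRightEmbedding_apply, S'] at hSt ⊢
    constructor
    · rintro ⟨ht1, ht⟩
      have := hSt ht
      exact ⟨t - 1, ⟨⟨by omega, by omega⟩, by rwa [Nat.sub_add_cancel (by omega)]⟩, by omega⟩
    · rintro ⟨t, ⟨_, ht⟩, rfl⟩
      exact ⟨by omega, ht⟩
  refine ⟨S', filter_subset _ _, fun t ht => (mem_filter.mp ht).2, ?_⟩
  rw [← card_map (s := S') (addRightEmbedding 1), ← hshift]
  split_ifs with h1
  · rw [card_erase_add_one h1]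
  · rw [erase_eq_of_notMem h1, add_zero]

theorem IsPrimitiveRoot.of_pow_eq_prime_pow {R : Type*} [CommMonoid R] {p t : ℕ} [Fact p.Prime]
    (ht : 1 ≤ t) {η ζ : R} (hη : IsPrimitiveRoot η (p ^ t)) (hζ : ζ ^ p = η) :
    IsPrimitiveRoot ζ (p ^ (t + 1)) := by
  obtain ⟨s, rfl⟩ : ∃ s, t = s + 1 := ⟨t - 1, by omega⟩
  have hp := (Fact.out : p.Prime)
  have hord : orderOf ζ = p ^ (s + 1 + 1) := by
    refine orderOf_eq_prime_pow ?_ ?_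
    · rw [pow_succ', pow_mul, hζ]
      exact hη.pow_ne_one_of_pos_of_lt (pow_ne_zero _ hp.ne_zero)
        (Nat.pow_lt_pow_right hp.one_lt (by omega))
    · rw [pow_succ' p (s + 1), pow_mul, hζ, hη.pow_eq_one]
  exact hord ▸ IsPrimitiveRoot.orderOf ζ

theorem IsPrimitiveRoot.eq_zero_of_forall_sum_mul_pow_eq_zero {R : Type*} [CommRing R]
    [IsDomain R] {p : ℕ} {ω : R} (hω : IsPrimitiveRoot ω p) {c : ℕ → R}
    (h : ∀ u < p, ∑ r ∈ range p, c r * (ω ^ u) ^ r = 0) : ∀ r < p, c r = 0 := by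
  have hc := Matrix.eq_zero_of_forall_index_sum_mul_pow_eq_zero
    (f := fun u : Fin p => ω ^ (u : ℕ)) (v := fun r : Fin p => c r)
    (fun u v huv => Fin.ext (hω.pow_inj u.2 v.2 huv)) (fun u => by rw [← h u u.2, sum_range])
  exact fun r hr => congrFun hc ⟨r, hr⟩

theorem sum_range_pow_succ_mul_pow {p m : ℕ} (c : ℕ → ℂ) (ζ : ℂ) :
    ∑ n ∈ range (p ^ (m + 1)), c n * ζ ^ n
      = ∑ r ∈ range p, (∑ q ∈ range (p ^ m), c (p * q + r) * (ζ ^ p) ^ q) * ζ ^ r := by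
  rw [pow_succ, sum_range_mul_eq_sum_sum_mul_add]
  refine sum_congr rfl fun r _ => ?_
  rw [sum_mul]
  refine sum_congr rfl fun q _ => ?_
  rw [pow_add, pow_mul]
  ring

/-- For `f n` the number of elements of a set in the class of `n` modulo `N`, this is the
divisibility of the mask polynomial by `Φ_k` (for `k ∣ N`). -/
def VanishesAtPrimitiveRoots (N k : ℕ) (f : ℕ → ℕ) : Prop :=
  ∀ ζ : ℂ, IsPrimitiveRoot ζ k → ∑ n ∈ range N, (f n : ℂ) * ζ ^ n = 0

theorem vanishesAtPrimitiveRoots_of_eq_zero {N k : ℕ} (hk : 0 < k) {f : ℕ → ℕ} {ζ : ℂ}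
    (hζ : IsPrimitiveRoot ζ k) (h : ∑ n ∈ range N, (f n : ℂ) * ζ ^ n = 0) :
    VanishesAtPrimitiveRoots N k f := by
  have aeval_eq (ξ : ℂ) : aeval ξ (∑ n ∈ range N, C (f n : ℤ) * X ^ n)
      = ∑ n ∈ range N, (f n : ℂ) * ξ ^ n := by simp
  intro ξ hξ
  have hdvd : minpoly ℤ ξ ∣ ∑ n ∈ range N, C (f n : ℤ) * X ^ n := by
    rw [← cyclotomic_eq_minpoly hξ hk, cyclotomic_eq_minpoly hζ hk]
    exact minpoly.isIntegrallyClosed_dvd (hζ.isIntegral hk) ((aeval_eq ζ).trans h)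
  rw [← aeval_eq]
  exact aeval_eq_zero_of_dvd_aeval_eq_zero hdvd (minpoly.aeval ℤ ξ)

namespace VanishesAtPrimitiveRoots

variable {p m : ℕ} [Fact p.Prime] {f : ℕ → ℕ}

theorem decimate {t : ℕ} (ht : 1 ≤ t)
    (h : VanishesAtPrimitiveRoots (p ^ (m + 1)) (p ^ (t + 1)) f) {r : ℕ} (hr : r < p) :
    VanishesAtPrimitiveRoots (p ^ m) (p ^ t) (fun q => f (p * q + r)) := by
  have hp := (Fact.out : p.Prime)
  intro η hη
  obtain ⟨ζ, hζ⟩ := IsAlgClosed.exists_pow_nat_eq η hp.pos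
  have hζprim := hη.of_pow_eq_prime_pow ht hζ
  set ω := ζ ^ p ^ t
  have hω : IsPrimitiveRoot ω p := hζprim.pow (pow_pos hp.pos _) (pow_succ p t)
  -- the `p`-th roots `ζ * ω ^ u` of `η` are primitive `p ^ (t + 1)`-th roots of unity
  have hcoset : ∀ u < p, ∑ r ∈ range p,
      ((∑ q ∈ range (p ^ m), (f (p * q + r) : ℂ) * η ^ q) * ζ ^ r) * (ω ^ u) ^ r = 0 := by
    intro u _
    have hpow : (ζ * ω ^ u) ^ p = η := by
      rw [mul_pow, hζ, ← pow_mul, ← pow_mul, show p ^ t * (u * p) = p ^ (t + 1) * u by ring,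
        pow_mul, hζprim.pow_eq_one, one_pow, mul_one]
    have hvan := h _ (hη.of_pow_eq_prime_pow ht hpow)
    rw [sum_range_pow_succ_mul_pow, hpow] at hvan
    rw [← hvan]
    exact sum_congr rfl fun r _ => by ring
  have hζr := hω.eq_zero_of_forall_sum_mul_pow_eq_zero hcoset r hr
  exact (mul_eq_zero.mp hζr).resolve_right
    (pow_ne_zero _ (hζprim.ne_zero (pow_ne_zero _ hp.ne_zero)))

theorem mul_sum_decimate (h : VanishesAtPrimitiveRoots (p ^ (m + 1)) p f) {r : ℕ} (hr : r < p) :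
    p * ∑ q ∈ range (p ^ m), f (p * q + r) = ∑ n ∈ range (p ^ (m + 1)), f n := by
  have hp := (Fact.out : p.Prime)
  obtain ⟨ω, hω⟩ : ∃ ω : ℂ, IsPrimitiveRoot ω p := ⟨_, Complex.isPrimitiveRoot_exp p hp.ne_zero⟩
  set F : ℕ → ℂ := fun r => ∑ q ∈ range (p ^ m), (f (p * q + r) : ℂ)
  set total : ℂ := ∑ n ∈ range (p ^ (m + 1)), (f n : ℂ)
  have hsplit (ξ : ℂ) (hξ : ξ ^ p = 1) :
      ∑ n ∈ range (p ^ (m + 1)), (f n : ℂ) * ξ ^ n = ∑ r ∈ range p, F r * ξ ^ r := by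
    simp [sum_range_pow_succ_mul_pow, hξ, F]
  -- the discrete Fourier transform of `r ↦ p * F r - total` vanishes
  have hcoset : ∀ u < p, ∑ r ∈ range p, (p * F r - total) * (ω ^ u) ^ r = 0 := by
    intro u hu
    have hωu : (ω ^ u) ^ p = 1 := by rw [← pow_mul, mul_comm, pow_mul, hω.pow_eq_one, one_pow]
    have hlin : ∑ r ∈ range p, (p * F r - total) * (ω ^ u) ^ r
        = p * ∑ r ∈ range p, F r * (ω ^ u) ^ r - total * ∑ r ∈ range p, (ω ^ u) ^ r := by
      rw [mul_sum, mul_sum, ← sum_sub_distrib]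
      exact sum_congr rfl fun r _ => by ring
    rw [hlin, ← hsplit _ hωu]
    rcases Nat.eq_zero_or_pos u with rfl | hu0
    · simp [total, mul_comm]
    · have hprim : IsPrimitiveRoot (ω ^ u) p :=
        hω.pow_of_coprime u (Nat.coprime_of_lt_prime hu0.ne' hu hp).symm
      rw [h _ hprim, hprim.geom_sum_eq_zero hp.one_lt, mul_zero, mul_zero, sub_zero]
  have hFr := sub_eq_zero.mp (hω.eq_zero_of_forall_sum_mul_pow_eq_zero hcoset r hr)
  simp only [F, total] at hFr
  exact_mod_cast hFr

theorem pow_card_dvd_and_mul_le_sum (m : ℕ) (f : ℕ → ℕ) (S : Finset ℕ) (hS : S ⊆ Icc 1 m)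
    (hvan : ∀ t ∈ S, VanishesAtPrimitiveRoots (p ^ m) (p ^ t) f) :
    p ^ #S ∣ ∑ n ∈ range (p ^ m), f n ∧ ∀ n < p ^ m, p ^ #S * f n ≤ ∑ n ∈ range (p ^ m), f n := by
  have hp := (Fact.out : p.Prime)
  induction m generalizing f S with
  | zero =>
    obtain rfl : S = ∅ := subset_empty.mp (hS.trans (by simp))
    simp
  | succ m ih =>
    obtain ⟨S', hS'm, hS'S, hcard⟩ := exists_shift_of_subset_Icc hS
    have hdec : ∀ r < p, p ^ #S' ∣ ∑ q ∈ range (p ^ m), f (p * q + r) ∧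
        ∀ q < p ^ m, p ^ #S' * f (p * q + r) ≤ ∑ q ∈ range (p ^ m), f (p * q + r) :=
      fun r hr => ih _ S' hS'm fun t ht =>
        (hvan (t + 1) (hS'S t ht)).decimate (mem_Icc.mp (hS'm ht)).1 hr
    have hsplit : ∑ n ∈ range (p ^ (m + 1)), f n
        = ∑ r ∈ range p, ∑ q ∈ range (p ^ m), f (p * q + r) := by
      rw [pow_succ, sum_range_mul_eq_sum_sum_mul_add]
    have hdigits : ∀ n < p ^ (m + 1), ∃ r < p, ∃ q < p ^ m, n = p * q + r :=
      fun n hn => ⟨n % p, Nat.mod_lt _ hp.pos, n / p,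
        Nat.div_lt_of_lt_mul (by rwa [pow_succ, mul_comm] at hn), (Nat.div_add_mod n p).symm⟩
    split_ifs at hcard with h1
    · have hequi : ∀ r < p, p * ∑ q ∈ range (p ^ m), f (p * q + r)
          = ∑ n ∈ range (p ^ (m + 1)), f n :=
        fun r hr => (pow_one p ▸ hvan 1 h1).mul_sum_decimate hr
      refine ⟨?_, fun n hn => ?_⟩
      · rw [← hequi 0 hp.pos, hcard, pow_succ, mul_comm p]
        exact mul_dvd_mul_right (hdec 0 hp.pos).1 p
      · obtain ⟨r, hr, q, hq, rfl⟩ := hdigits n hn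
        rw [← hequi _ hr, hcard, pow_succ, mul_comm _ p, mul_assoc]
        exact Nat.mul_le_mul_left p ((hdec _ hr).2 _ hq)
    · rw [add_zero] at hcard
      refine ⟨?_, fun n hn => ?_⟩
      · rw [hsplit, hcard]
        exact dvd_sum fun r hr => (hdec r (mem_range.mp hr)).1
      · obtain ⟨r, hr, q, hq, rfl⟩ := hdigits n hn
        rw [hsplit, hcard]
        exact ((hdec _ hr).2 _ hq).trans
          (single_le_sum (f := fun r => ∑ q ∈ range (p ^ m), f (p * q + r))
            (fun r _ => Nat.zero_le _) (mem_range.mpr hr))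

end VanishesAtPrimitiveRoots

theorem exists_pow_mul_le_sum_and_pow_dvd_sum {p m : ℕ} [Fact p.Prime] (f g : ℕ → ℕ)
    (h : ∀ t ∈ Icc 1 m, ∀ ζ : ℂ, IsPrimitiveRoot ζ (p ^ t) →
      (∑ n ∈ range (p ^ m), (f n : ℂ) * ζ ^ n) * (∑ n ∈ range (p ^ m), (g n : ℂ) * ζ ^ n) = 0) :
    ∃ s t, s + t = m ∧ (∀ n < p ^ m, p ^ s * f n ≤ ∑ n ∈ range (p ^ m), f n) ∧
      p ^ t ∣ ∑ n ∈ range (p ^ m), g n := by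
  have hp := (Fact.out : p.Prime)
  choose ζ hζ using fun t : ℕ => (⟨_, Complex.isPrimitiveRoot_exp (p ^ t)
    (pow_ne_zero t hp.ne_zero)⟩ : ∃ ζ : ℂ, IsPrimitiveRoot ζ (p ^ t))
  set S := (Icc 1 m).filter fun t => ∑ n ∈ range (p ^ m), (f n : ℂ) * ζ t ^ n = 0
  set T := (Icc 1 m).filter fun t => ¬ ∑ n ∈ range (p ^ m), (f n : ℂ) * ζ t ^ n = 0
  have hS : ∀ t ∈ S, VanishesAtPrimitiveRoots (p ^ m) (p ^ t) f := fun t ht =>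
    vanishesAtPrimitiveRoots_of_eq_zero (pow_pos hp.pos t) (hζ t) (mem_filter.mp ht).2
  have hT : ∀ t ∈ T, VanishesAtPrimitiveRoots (p ^ m) (p ^ t) g := fun t ht =>
    vanishesAtPrimitiveRoots_of_eq_zero (pow_pos hp.pos t) (hζ t)
      ((mul_eq_zero.mp (h t (mem_filter.mp ht).1 _ (hζ t))).resolve_left (mem_filter.mp ht).2)
  refine ⟨#S, #T, ?_,
    (VanishesAtPrimitiveRoots.pow_card_dvd_and_mul_le_sum m f S (filter_subset _ _) hS).2,
    (VanishesAtPrimitiveRoots.pow_card_dvd_and_mul_le_sum m g T (filter_subset _ _) hT).1⟩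
  rw [card_filter_add_card_filter_not, Nat.card_Icc, Nat.add_sub_cancel]

theorem ZMod.natCast_dvd_sub_iff_val_mod_eq {M D : ℕ} [NeZero M] (hD : D ∣ M) (x y : ZMod M) :
    (D : ZMod M) ∣ y - x ↔ y.val % D = x.val % D := by
  have hker : ∀ z : ZMod M, (D : ZMod M) ∣ z ↔ ZMod.castHom hD (ZMod D) z = 0 := by
    intro z
    constructor
    · rintro ⟨w, rfl⟩
      rw [map_mul, map_natCast, ZMod.natCast_self, zero_mul]
    · intro hz
      rw [ZMod.castHom_apply, ZMod.cast_eq_val, ZMod.natCast_eq_zero_iff] at hz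
      obtain ⟨k, hk⟩ := hz
      exact ⟨k, by rw [← ZMod.natCast_zmod_val z, hk, Nat.cast_mul]⟩
  rw [hker, map_sub, sub_eq_zero, ZMod.castHom_apply, ZMod.castHom_apply, ZMod.cast_eq_val,
    ZMod.cast_eq_val, ZMod.natCast_eq_natCast_iff']

namespace IsTiling

variable {M : ℕ} [NeZero M] {A B : Finset (ZMod M)}

theorem sum_add_eq_sum_univ (h : IsTiling M A B) {β : Type*} [AddCommMonoid β]
    (φ : ZMod M → β) : ∑ ab ∈ A ×ˢ B, φ (ab.1 + ab.2) = ∑ z, φ z := by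
  refine sum_bij (fun ab _ => ab.1 + ab.2) (fun _ _ => mem_univ _) ?_ ?_ (fun _ _ => rfl)
  · rintro ⟨a, b⟩ hab ⟨a', b'⟩ hab' heq
    rw [mem_product] at hab hab'
    exact (h _).unique ⟨hab.1, hab.2, rfl⟩ ⟨hab'.1, hab'.2, heq.symm⟩
  · intro z _
    obtain ⟨⟨a, b⟩, ⟨ha, hb, hab⟩, -⟩ := h z
    exact ⟨(a, b), mem_product.mpr ⟨ha, hb⟩, hab⟩

theorem sum_mul_sum_eq_sum_univ (h : IsTiling M A B) {R : Type*} [CommSemiring R]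
    (ψ : AddChar (ZMod M) R) : (∑ a ∈ A, ψ a) * (∑ b ∈ B, ψ b) = ∑ z, ψ z := by
  rw [sum_mul_sum, ← sum_product', ← h.sum_add_eq_sum_univ]
  simp only [AddChar.map_add_eq_mul]

theorem card_mul_card (h : IsTiling M A B) : #A * #B = M := by
  simpa using h.sum_mul_sum_eq_sum_univ (1 : AddChar (ZMod M) ℕ)

theorem sum_pow_val_mul_sum_pow_val (h : IsTiling M A B) {ζ : ℂ} (hζ : ζ ^ M = 1)
    (hζ1 : ζ ≠ 1) : (∑ a ∈ A, ζ ^ a.val) * (∑ b ∈ B, ζ ^ b.val) = 0 := by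
  have hψ : AddChar.zmodChar M hζ ≠ 1 := fun h1 => hζ1 <| by
    have := DFunLike.congr_fun h1 ((1 : ℕ) : ZMod M)
    rwa [AddChar.zmodChar_apply', pow_one, AddChar.one_apply] at this
  exact (h.sum_mul_sum_eq_sum_univ _).trans (AddChar.sum_eq_zero_of_ne_one hψ)

theorem exists_pow_mul_ncard_inter_gridSet_le (h : IsTiling M A B) {p m : ℕ} [Fact p.Prime]
    (hpm : p ^ m ∣ M) (x : ZMod M) :
    ∃ s t, s + t = m ∧ p ^ s * (↑A ∩ gridSet M x (p ^ m)).ncard ≤ #A ∧ p ^ t ∣ #B := by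
  have hp := (Fact.out : p.Prime)
  have hD : 0 < p ^ m := pow_pos hp.pos m
  obtain ⟨s, t, hst, hA, hB⟩ := exists_pow_mul_le_sum_and_pow_dvd_sum (p := p) (m := m)
    (fun n => #{a ∈ A | a.val % p ^ m = n}) (fun n => #{b ∈ B | b.val % p ^ m = n}) <| by
      intro t ht ζ hζ
      have ht := mem_Icc.mp ht
      have hζD : ζ ^ p ^ m = 1 := by
        obtain ⟨c, hc⟩ := pow_dvd_pow p ht.2
        rw [hc, pow_mul, hζ.pow_eq_one, one_pow]
      have hζM : ζ ^ M = 1 := by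
        obtain ⟨c, hc⟩ := hpm
        rw [hc, pow_mul, hζD, one_pow]
      rw [← A.sum_pow_eq_sum_card_filter_mod ZMod.val hD hζD,
        ← B.sum_pow_eq_sum_card_filter_mod ZMod.val hD hζD]
      exact h.sum_pow_val_mul_sum_pow_val hζM (hζ.ne_one (Nat.one_lt_pow (by omega) hp.one_lt))
  have hcard (S : Finset (ZMod M)) : ∑ n ∈ range (p ^ m), #{a ∈ S | a.val % p ^ m = n} = #S :=
    (card_eq_sum_card_fiberwise fun a _ => mem_range.mpr (Nat.mod_lt _ hD)).symm
  have hgrid : (↑A ∩ gridSet M x (p ^ m)).ncard = #{a ∈ A | a.val % p ^ m = x.val % p ^ m} := by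
    rw [← Set.ncard_coe_finset, coe_filter]
    congr 1
    ext y
    exact and_congr_right fun _ => ZMod.natCast_dvd_sub_iff_val_mod_eq hpm x y
  refine ⟨s, t, hst, ?_, hcard B ▸ hB⟩
  rw [hgrid, ← hcard A]
  exact hA _ (Nat.mod_lt _ hD)

end IsTiling

theorem statement5_general
    (pi pj pk : ℕ) (hpi : pi.Prime) (hpj : pj.Prime) (hpk : pk.Prime)
    (hij : pi ≠ pj) (hik : pi ≠ pk)
    (ni nj nk : ℕ)
    (M : ℕ) (hM : M = pi ^ ni * pj ^ nj * pk ^ nk)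
    (A B : Set (ZMod M)) (htile : IsTiling M A B)
    (bi bj bk : ℕ) (hcardA : A.ncard = pi ^ bi * pj ^ bj * pk ^ bk)
    (x : ZMod M) (ai : ℕ) (hai : ai ≤ ni) :
    (A ∩ gridSet M x (pi ^ (ni - ai))).ncard ≤ pi ^ ai * pj ^ bj * pk ^ bk := by
  have : Fact pi.Prime := ⟨hpi⟩
  have : NeZero M := ⟨hM ▸ mul_ne_zero (mul_ne_zero (pow_ne_zero _ hpi.ne_zero)
    (pow_ne_zero _ hpj.ne_zero)) (pow_ne_zero _ hpk.ne_zero)⟩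
  obtain ⟨A, rfl⟩ := A.toFinite.exists_finset_coe
  obtain ⟨B, rfl⟩ := B.toFinite.exists_finset_coe
  rw [Set.ncard_coe_finset] at hcardA
  obtain ⟨s, t, hst, hA, hB⟩ := htile.exists_pow_mul_ncard_inter_gridSet_le
    (hM ▸ dvd_mul_of_dvd_left (dvd_mul_of_dvd_left (pow_dvd_pow pi (Nat.sub_le ni ai)) _) _) x
  have htb : t + bi ≤ ni := by
    have hcop : Nat.Coprime (pi ^ (t + bi)) (pj ^ nj * pk ^ nk) :=
      Nat.Coprime.pow_left _ (Nat.Coprime.mul_right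
        (((Nat.coprime_primes hpi hpj).mpr hij).pow_right nj)
        (((Nat.coprime_primes hpi hpk).mpr hik).pow_right nk))
    have hdvd : pi ^ (t + bi) ∣ pi ^ ni * (pj ^ nj * pk ^ nk) := by
      rw [← mul_assoc, ← hM, ← htile.card_mul_card, hcardA, pow_add, mul_comm (pi ^ t)]
      exact mul_dvd_mul (dvd_mul_of_dvd_left (dvd_mul_right _ _) _) hB
    exact (Nat.pow_dvd_pow_iff_le_right hpi.one_lt).mp (hcop.dvd_of_dvd_mul_right hdvd)
  refine Nat.le_of_mul_le_mul_left ?_ (pow_pos hpi.pos s)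
  calc pi ^ s * _ ≤ pi ^ bi * (pj ^ bj * pk ^ bk) := by rw [← mul_assoc, ← hcardA]; exact hA
    _ ≤ pi ^ (s + ai) * (pj ^ bj * pk ^ bk) :=
        Nat.mul_le_mul_right _ (Nat.pow_le_pow_right hpi.pos (by omega))
    _ = pi ^ s * (pi ^ ai * pj ^ bj * pk ^ bk) := by ring

/-- **Plane bound.** Let `M = p_i^{n_i} p_j^{n_j} p_k^{n_k}`, `A ⊕ B = ℤ_M`,
`|A| = p_i^{β_i} p_j^{β_j} p_k^{β_k}`. Then for every `x ∈ ℤ_M` and `0 ≤ α_i ≤ n_i`,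
`|A ∩ Π(x, p_i^{n_i - α_i})| ≤ p_i^{α_i} p_j^{β_j} p_k^{β_k}`. -/
theorem statement5
    (pi pj pk : ℕ) (hpi : pi.Prime) (hpj : pj.Prime) (hpk : pk.Prime)
    (hij : pi ≠ pj) (hik : pi ≠ pk) (hjk : pj ≠ pk)
    (ni nj nk : ℕ) (hni : 1 ≤ ni) (hnj : 1 ≤ nj) (hnk : 1 ≤ nk)
    (M : ℕ) (hM : M = pi ^ ni * pj ^ nj * pk ^ nk)
    (A B : Set (ZMod M)) (htile : IsTiling M A B)
    (bi bj bk : ℕ) (hcardA : A.ncard = pi ^ bi * pj ^ bj * pk ^ bk)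
    (x : ZMod M) (ai : ℕ) (hai : ai ≤ ni) :
    (A ∩ gridSet M x (pi ^ (ni - ai))).ncard ≤ pi ^ ai * pj ^ bj * pk ^ bk :=
  statement5_general pi pj pk hpi hpj hpk hij hik ni nj nk M hM A B htile bi bj bk hcardA x ai hai
end

section
/- Let M = p_i^{n_i} p_j^{n_j} p_k^{n_k} with p_i, p_j, p_k distinct primes. Assume A ⊕ B = ℤ_M and |A| = p_i^{β_i} p_j^{β_j} p_k^{β_k} with β_i > 0. Suppose that for some x ∈ ℤ_M and some 1 ≤ α_0 ≤ n_i one has |A ∩ Π(x, p_i^{n_i−α_0})| > p_i^{β_i−1} p_j^{β_j} p_k^{β_k}. Then Φ_{p_i^{n_i−α}} | A for at least one α ∈ {0, 1, …, α_0−1}. -/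
open Polynomial

/-!
Write `p = p_i`. For every `s ≤ n_i` the cyclotomic polynomial `Φ_{p^s}` is irreducible and
divides `A(X) B(X) ≡ 1 + X + ⋯ + X^{M-1} (mod X^M - 1)`, so it divides `A` or `B`. If all of
them divided `B`, then `p^{n_i} = ∏ Φ_{p^s}(1)` would divide `|B| = M / |A|`, which is impossible
since `p ∣ |A|`. Hence `Φ_{p^s} ∣ A` for some `s ≤ n_i`, and if the conclusion fails this `s` is at
most `n_i - α₀`. But `Φ_{p^s} ∣ A` forces `A` to be equidistributed over the `p` classes mod `p^s`
lying above each class mod `p^{s-1}`, so no class mod `p^s`, in particular none containing the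
plane `Π(x, p_i^{n_i-α₀})`, carries more than `|A| / p` elements of `A`.
-/

open Finset

theorem X_pow_sub_one_dvd_X_pow_sub_X_pow_mod {R : Type*} [CommRing R] (n v : ℕ) :
    (X ^ n - 1 : R[X]) ∣ X ^ v - X ^ (v % n) := by
  have h : (X ^ v - X ^ (v % n) : R[X]) = ((X ^ n) ^ (v / n) - 1) * X ^ (v % n) := by
    rw [sub_mul, one_mul, ← pow_mul, ← pow_add, Nat.div_add_mod]
  rw [h]
  exact (sub_one_dvd_pow_sub_one _ _).mul_right _

theorem cyclotomic_dvd_sum_X_pow_mod {α : Type*} {N : ℕ} (S : Finset α) (f : α → ℕ)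
    (h : cyclotomic N ℤ ∣ ∑ a ∈ S, X ^ f a) : cyclotomic N ℤ ∣ ∑ a ∈ S, X ^ (f a % N) := by
  have hdiff : cyclotomic N ℤ ∣ ∑ a ∈ S, (X ^ f a - X ^ (f a % N)) :=
    (cyclotomic.dvd_X_pow_sub_one N ℤ).trans
      (dvd_sum fun a _ => X_pow_sub_one_dvd_X_pow_sub_X_pow_mod N (f a))
  rw [sum_sub_distrib] at hdiff
  exact (dvd_sub_right h).mp hdiff

theorem coeff_sum_X_pow {α : Type*} (S : Finset α) (f : α → ℕ) (u : ℕ) :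
    (∑ a ∈ S, (X : ℤ[X]) ^ f a).coeff u = #{a ∈ S | f a = u} := by
  simp [finsetSum_coeff, coeff_X_pow, eq_comm]

theorem natDegree_sum_X_pow_mod_lt {α : Type*} {N : ℕ} (hN : 0 < N) (S : Finset α)
    (f : α → ℕ) : (∑ a ∈ S, (X : ℤ[X]) ^ (f a % N)).natDegree < N := by
  refine lt_of_le_of_lt (natDegree_sum_le_of_forall_le S _ fun a _ => ?_) (Nat.sub_lt hN one_pos)
  exact (natDegree_X_pow_le _).trans (Nat.le_sub_one_of_lt (Nat.mod_lt _ hN))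

theorem natDegree_lt_of_natDegree_cyclotomic_prime_pow_mul_lt {p m : ℕ} (hp : p.Prime)
    {c : ℤ[X]} (h : (cyclotomic (p ^ (m + 1)) ℤ * c).natDegree < p ^ (m + 1)) :
    c.natDegree < p ^ m := by
  rcases eq_or_ne c 0 with rfl | hc
  · simpa using pow_pos hp.pos m
  rw [natDegree_mul (cyclotomic_ne_zero _ ℤ) hc, natDegree_cyclotomic,
    Nat.totient_prime_pow_succ hp, pow_succ] at h
  have : p ^ m * p = p ^ m * (p - 1) + p ^ m := by
    rw [← Nat.mul_add_one, Nat.sub_add_cancel hp.one_le]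
  omega

theorem coeff_geom_sum_X_pow_mul {R : Type*} [Semiring R] {c : R[X]} {q p u j : ℕ}
    (hc : c.natDegree < q) (hu : u < q) (hj : j < p) :
    ((∑ i ∈ range p, (X ^ q) ^ i) * c).coeff (u + q * j) = c.coeff u := by
  rw [sum_mul, finsetSum_coeff, sum_eq_single j]
  · rw [← pow_mul, coeff_X_pow_mul', if_pos (by omega), Nat.add_sub_cancel]
  · intro i _ hij
    rw [← pow_mul, coeff_X_pow_mul']
    split_ifs with hle
    · have hij' : i + 1 ≤ j := by
        by_contra! hji
        have := Nat.mul_le_mul_left q (show j + 1 ≤ i by omega)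
        rw [Nat.mul_add_one] at this
        omega
      have := Nat.mul_le_mul_left q hij'
      rw [Nat.mul_add_one] at this
      exact coeff_eq_zero_of_natDegree_lt (by omega)
    · rfl
  · exact fun hj' => absurd (mem_range.mpr hj) hj'

theorem prime_mul_card_filter_mod_le {α : Type*} {p m : ℕ} (hp : p.Prime) (S : Finset α)
    (f : α → ℕ) (hdvd : cyclotomic (p ^ (m + 1)) ℤ ∣ ∑ a ∈ S, X ^ f a) (t : ℕ) :
    p * #{a ∈ S | f a % p ^ (m + 1) = t} ≤ #S := by
  set N := p ^ (m + 1)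
  set q := p ^ m
  have hq : 0 < q := pow_pos hp.pos m
  have hN0 : 0 < N := pow_pos hp.pos _
  have hN : N = q * p := pow_succ p m
  rcases lt_or_ge t N with ht | ht
  swap
  · have : #{a ∈ S | f a % N = t} = 0 :=
      card_eq_zero.mpr <| filter_eq_empty_iff.mpr fun a _ => ((Nat.mod_lt _ hN0).trans_le ht).ne
    simp [this]
  obtain ⟨c, hc⟩ := cyclotomic_dvd_sum_X_pow_mod S f hdvd
  have hcdeg : c.natDegree < q :=
    natDegree_lt_of_natDegree_cyclotomic_prime_pow_mul_lt hp
      (hc ▸ natDegree_sum_X_pow_mod_lt hN0 S f)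
  have hcount : ∀ j < p, (#{a ∈ S | f a % N = t % q + q * j} : ℤ) = c.coeff (t % q) := by
    intro j hj
    rw [← coeff_sum_X_pow, hc, cyclotomic_prime_pow_eq_geom_sum hp,
      coeff_geom_sum_X_pow_mul hcdeg (Nat.mod_lt _ hq) hj]
  have htq : t % q + q * (t / q) = t := Nat.mod_add_div t q
  have hconst :
      ∀ j ∈ range p, #{a ∈ S | f a % N = t % q + q * j} = #{a ∈ S | f a % N = t} := by
    intro j hj
    have := hcount (t / q) ((Nat.div_lt_iff_lt_mul hq).mpr (by rwa [mul_comm, ← hN]))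
    rw [htq] at this
    exact_mod_cast (hcount j (mem_range.mp hj)).trans this.symm
  have hinj : Set.InjOn (fun j => t % q + q * j) (range p) := fun i _ j _ hij =>
    Nat.eq_of_mul_eq_mul_left hq (Nat.add_left_cancel hij)
  calc p * #{a ∈ S | f a % N = t}
      = ∑ j ∈ range p, #{a ∈ S | f a % N = t % q + q * j} := by
        rw [sum_congr rfl hconst, sum_const, card_range, smul_eq_mul]
    _ = #{a ∈ S | f a % N ∈ (range p).image fun j => t % q + q * j} := by
        rw [← sum_card_fiberwise_eq_card_filter, sum_image hinj]
    _ ≤ #S := card_filter_le _ _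

theorem val_mod_eq_of_mem_gridSet {M N D : ℕ} [NeZero M] (hNM : N ∣ M) (hND : N ∣ D)
    {x y : ZMod M} (hy : y ∈ gridSet M x D) : y.val % N = x.val % N := by
  obtain ⟨e, he⟩ := hy
  have hD : ((D : ℕ) : ZMod N) = 0 := (ZMod.natCast_eq_zero_iff _ _).mpr hND
  have hcast := congrArg (ZMod.castHom hNM (ZMod N)) he
  rw [map_sub, map_mul, map_natCast, hD, zero_mul, sub_eq_zero] at hcast
  rw [← ZMod.natCast_eq_natCast_iff', ZMod.natCast_val, ZMod.natCast_val]
  exact hcast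

theorem prime_mul_ncard_inter_gridSet_le {M p m D : ℕ} [NeZero M] (hp : p.Prime)
    (hM : p ^ (m + 1) ∣ M) (hD : p ^ (m + 1) ∣ D) {A : Finset (ZMod M)}
    (hA : cycDvd M (p ^ (m + 1)) A) (x : ZMod M) :
    p * ((A : Set (ZMod M)) ∩ gridSet M x D).ncard ≤ #A :=
  calc p * ((A : Set (ZMod M)) ∩ gridSet M x D).ncard
      ≤ p * #{a ∈ A | a.val % p ^ (m + 1) = x.val % p ^ (m + 1)} := by
        gcongr
        rw [← Set.ncard_coe_finset]
        refine Set.ncard_le_ncard (fun a ⟨haA, hax⟩ => ?_) (finite_toSet _)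
        exact mem_filter.mpr ⟨haA, val_mod_eq_of_mem_gridSet hM hD hax⟩
    _ ≤ #A := prime_mul_card_filter_mod_le hp A ZMod.val hA _

section Tiling

variable {M : ℕ} [NeZero M] {A B : Finset (ZMod M)}

theorem IsTiling.sum_add (h : IsTiling M A B) {β : Type*} [AddCommMonoid β]
    (g : ZMod M → β) : ∑ ab ∈ A ×ˢ B, g (ab.1 + ab.2) = ∑ z, g z := by
  refine sum_bij (fun ab _ => ab.1 + ab.2) (fun _ _ => mem_univ _) ?_ ?_ fun _ _ => rfl
  · intro ab hab ab' hab' heq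
    rw [mem_product] at hab hab'
    exact (h _).unique ⟨hab.1, hab.2, rfl⟩ ⟨hab'.1, hab'.2, heq.symm⟩
  · intro z _
    obtain ⟨ab, ⟨ha, hb, hz⟩, -⟩ := h z
    exact ⟨ab, mem_product.mpr ⟨ha, hb⟩, hz⟩

theorem IsTiling.card_mul_card_s6 (h : IsTiling M A B) : #A * #B = M := by
  simpa [card_product] using h.sum_add fun _ => (1 : ℕ)

theorem sum_univ_X_pow_val : ∑ z : ZMod M, (X : ℤ[X]) ^ z.val = ∑ i ∈ range M, X ^ i := by
  obtain ⟨k, rfl⟩ := Nat.exists_eq_succ_of_ne_zero (NeZero.ne M)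
  exact Fin.sum_univ_eq_sum_range (fun i => X ^ i) (k + 1)

theorem IsTiling.cyclotomic_dvd_maskPoly_mul (h : IsTiling M A B) {s : ℕ} (hsM : s ∣ M)
    (hs : s ≠ 1) : cyclotomic s ℤ ∣ maskPoly M A * maskPoly M B := by
  have hAB : maskPoly M A * maskPoly M B = ∑ ab ∈ A ×ˢ B, X ^ (ab.1.val + ab.2.val) := by
    simp only [maskPoly, sum_mul_sum, sum_product, pow_add]
  have hall :
      ∑ ab ∈ A ×ˢ B, X ^ ((ab.1.val + ab.2.val) % M) = ∑ i ∈ range M, (X : ℤ[X]) ^ i := by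
    simp only [← ZMod.val_add]
    rw [h.sum_add fun z => X ^ z.val, sum_univ_X_pow_val]
  have hdiff : X ^ M - 1 ∣ maskPoly M A * maskPoly M B - ∑ i ∈ range M, X ^ i := by
    rw [hAB, ← hall, ← sum_sub_distrib]
    exact dvd_sum fun ab _ => X_pow_sub_one_dvd_X_pow_sub_X_pow_mod M _
  have hXM : cyclotomic s ℤ ∣ X ^ M - 1 :=
    (cyclotomic.dvd_X_pow_sub_one s ℤ).trans (dvd_pow_sub_one_of_dvd hsM)
  simpa using dvd_add (hXM.trans hdiff) (cyclotomic_dvd_geom_sum_of_dvd ℤ hsM hs)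

theorem IsTiling.cycDvd_or (h : IsTiling M A B) {s : ℕ} (hsM : s ∣ M) (hs : s ≠ 1) :
    cycDvd M s A ∨ cycDvd M s B :=
  (cyclotomic.irreducible (Nat.pos_of_dvd_of_pos hsM (NeZero.pos M))).prime.dvd_or_dvd
    (h.cyclotomic_dvd_maskPoly_mul hsM hs)

end Tiling

theorem prod_cyclotomic_dvd {ι : Type*} {I : Finset ι} {g : ι → ℕ} (hg : Set.InjOn g I)
    {F : ℤ[X]} (h : ∀ i ∈ I, cyclotomic (g i) ℤ ∣ F) : ∏ i ∈ I, cyclotomic (g i) ℤ ∣ F := by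
  rw [← map_dvd_map (Int.castRingHom ℚ) Int.cast_injective
    (monic_prod_of_monic _ _ fun i _ => cyclotomic.monic _ ℤ), Polynomial.map_prod]
  simp only [map_cyclotomic]
  refine prod_dvd_of_coprime (fun i hi j hj hij => cyclotomic.isCoprime_rat (hg.ne hi hj hij))
    fun i hi => ?_
  simpa using map_dvd (Int.castRingHom ℚ) (h i hi)

theorem pow_dvd_card_of_cycDvd {M p n : ℕ} (hp : p.Prime) {B : Finset (ZMod M)}
    (hB : ∀ i < n, cycDvd M (p ^ (i + 1)) B) : p ^ n ∣ #B := by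
  have : Fact p.Prime := ⟨hp⟩
  have hinj : Set.InjOn (fun i => p ^ (i + 1)) (range n) := fun i _ j _ hij =>
    Nat.succ_injective (Nat.pow_right_injective hp.two_le hij)
  have := eval_dvd (x := 1) (prod_cyclotomic_dvd hinj fun i hi => hB i (mem_range.mp hi))
  simp only [eval_prod, eval_one_cyclotomic_prime_pow, prod_const, card_range, maskPoly,
    eval_finsetSum, eval_pow, eval_X, one_pow, sum_const, nsmul_eq_mul, mul_one] at this
  exact_mod_cast this

theorem statement6_general
    (pi pj pk : ℕ) (hpi : pi.Prime) (hpj : pj.Prime) (hpk : pk.Prime)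
    (hij : pi ≠ pj) (hik : pi ≠ pk)
    (ni nj nk : ℕ)
    (M : ℕ) (hM : M = pi ^ ni * pj ^ nj * pk ^ nk)
    (A B : Finset (ZMod M))
    (htile : IsTiling M (A : Set (ZMod M)) (B : Set (ZMod M)))
    (bi bj bk : ℕ) (hbi : 0 < bi)
    (hcardA : A.card = pi ^ bi * pj ^ bj * pk ^ bk)
    (x : ZMod M) (a0 : ℕ)
    (hbig : pi ^ (bi - 1) * pj ^ bj * pk ^ bk <
      ((A : Set (ZMod M)) ∩ gridSet M x (pi ^ (ni - a0))).ncard) :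
    ∃ a < a0, cycDvd M (pi ^ (ni - a)) A := by
  by_contra! hcon
  have : NeZero M := ⟨hM ▸ mul_ne_zero (mul_ne_zero (pow_ne_zero _ hpi.ne_zero)
    (pow_ne_zero _ hpj.ne_zero)) (pow_ne_zero _ hpk.ne_zero)⟩
  have hpowM : ∀ {s}, s ≤ ni → pi ^ s ∣ M := fun hs =>
    hM ▸ ((pow_dvd_pow pi hs).mul_right _).mul_right _
  obtain ⟨m, hm, hA⟩ : ∃ m, m + 1 ≤ ni - a0 ∧ cycDvd M (pi ^ (m + 1)) A := by
    by_contra! hnone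
    have hB : ∀ i < ni, cycDvd M (pi ^ (i + 1)) B := fun i hi =>
      (htile.cycDvd_or (hpowM hi) (Nat.one_lt_pow (by omega) hpi.one_lt).ne').resolve_left
        fun hA => if h : i + 1 ≤ ni - a0 then hnone i h hA
          else hcon (ni - (i + 1)) (by omega) (by rwa [Nat.sub_sub_self hi])
    have hdvdM : pi ^ (ni + 1) ∣ pi ^ ni * (pj ^ nj * pk ^ nk) := by
      rw [← mul_assoc, ← hM, ← htile.card_mul_card_s6, pow_succ', hcardA]
      exact mul_dvd_mul (((dvd_pow_self pi hbi.ne').mul_right _).mul_right _)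
        (pow_dvd_card_of_cycDvd hpi hB)
    have hcop : pi.Coprime (pj ^ nj * pk ^ nk) :=
      (((Nat.coprime_primes hpi hpj).mpr hij).pow_right _).mul_right
        (((Nat.coprime_primes hpi hpk).mpr hik).pow_right _)
    rw [pow_succ, Nat.mul_dvd_mul_iff_left (pow_pos hpi.pos _)] at hdvdM
    exact hpi.one_lt.ne' (hcop.eq_one_of_dvd hdvdM)
  have hplane :=
    prime_mul_ncard_inter_gridSet_le hpi (hpowM (by omega)) (pow_dvd_pow pi hm) hA x
  have hcard : #A = pi * (pi ^ (bi - 1) * pj ^ bj * pk ^ bk) := by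
    rw [hcardA, ← mul_assoc, ← mul_assoc, ← pow_succ', Nat.sub_add_cancel hbi]
  rw [hcard] at hplane
  exact absurd (Nat.le_of_mul_le_mul_left hplane hpi.pos) hbig.not_ge

/-- Let `M = p_i^{n_i} p_j^{n_j} p_k^{n_k}`, `A ⊕ B = ℤ_M`,
`|A| = p_i^{β_i} p_j^{β_j} p_k^{β_k}` with `β_i > 0`. If for some `x` and `1 ≤ α₀ ≤ n_i` one
has `|A ∩ Π(x, p_i^{n_i-α₀})| > p_i^{β_i-1} p_j^{β_j} p_k^{β_k}`, then `Φ_{p_i^{n_i-α}} | A`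
for some `α ∈ {0, …, α₀ - 1}`. -/
theorem statement6
    (pi pj pk : ℕ) (hpi : pi.Prime) (hpj : pj.Prime) (hpk : pk.Prime)
    (hij : pi ≠ pj) (hik : pi ≠ pk) (hjk : pj ≠ pk)
    (ni nj nk : ℕ) (hni : 1 ≤ ni) (hnj : 1 ≤ nj) (hnk : 1 ≤ nk)
    (M : ℕ) (hM : M = pi ^ ni * pj ^ nj * pk ^ nk)
    (A B : Finset (ZMod M))
    (htile : IsTiling M (A : Set (ZMod M)) (B : Set (ZMod M)))
    (bi bj bk : ℕ) (hbi : 0 < bi)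
    (hcardA : A.card = pi ^ bi * pj ^ bj * pk ^ bk)
    (x : ZMod M) (a0 : ℕ) (ha0 : 1 ≤ a0) (ha0' : a0 ≤ ni)
    (hbig : pi ^ (bi - 1) * pj ^ bj * pk ^ bk <
      ((A : Set (ZMod M)) ∩ gridSet M x (pi ^ (ni - a0))).ncard) :
    ∃ a < a0, cycDvd M (pi ^ (ni - a)) A :=
  statement6_general pi pj pk hpi hpj hpk hij hik ni nj nk M hM A B htile bi bj bk hbi hcardA x a0
    hbig
end

section
/- Let M = p_i^{n_i} p_j^{n_j} p_k^{n_k} with p_i, p_j, p_k distinct primes, and let A ⊆ ℤ_M with Φ_M | A. Suppose there is a plane Π = Π(z, p_i^{n_i}) such that A ∩ Π = S_j ∪ S_k for disjoint sets S_j, S_k with S_j M-fibered in the p_j direction and S_k M-fibered in the p_k direction. Then for every z′ ∈ ℤ_M with (z−z′, M) = M/p_i, the set A ∩ Π(z′, p_i^{n_i}) admits a decomposition of the same kind: it equals S′_j ∪ S′_k for disjoint sets S′_j, S′_k with S′_j M-fibered in the p_j direction and S′_k M-fibered in the p_k direction. -/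
open Polynomial

/-! Every proper divisor `s` of `M` divides `M/p_i`, `M/p_j` or `M/p_k`. So if `M/p_ν ∣ d_ν`, each
factor `Φ_s` of `X^M - 1` divides `A(X)` (for `s = M`) or one of the `X^{d_ν} - 1`, and
`X^M - 1 ∣ A(X) (X^{d_i} - 1) (X^{d_j} - 1) (X^{d_k} - 1)`. Read in the group ring of `ℤ_M`, the
third mixed difference of `1_A` along `d_i, d_j, d_k` vanishes: the second difference along
`(d_j, d_k)` is `d_i`-periodic. On `Π(z)` that second difference is zero, because
`1_A = 1_{S_j} + 1_{S_k}` there and `1_{S_j}` is `d_j`-periodic, `1_{S_k}` is `d_k`-periodic. With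
`d_i = z - z'` it is then zero on `Π(z')` as well. So if `s ∈ A ∩ Π(z')` has a point `c ∉ A` on
its `p_j`-fiber, every `b` on its `p_k`-fiber lies in `A` while `b + (c - s) ∉ A`. Hence the
points of `A ∩ Π(z')` whose whole `p_j`-fiber lies in `A` form `S'_j`, and the remaining ones are
`p_k`-fibered. -/

open fwdDiff Set

theorem Nat.exists_prime_dvd_and_dvd_div_of_mem_properDivisors {s n : ℕ}
    (hs : s ∈ n.properDivisors) : ∃ p, p.Prime ∧ p ∣ n ∧ s ∣ n / p := by
  obtain ⟨⟨q, rfl⟩, hlt⟩ := Nat.mem_properDivisors.1 hs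
  have hq : q ≠ 1 := by rintro rfl; simp at hlt
  obtain ⟨p, hp, t, rfl⟩ := Nat.exists_prime_and_dvd hq
  refine ⟨p, hp, ⟨s * t, by ring⟩, ?_⟩
  rw [show s * (p * t) = p * (s * t) by ring, Nat.mul_div_cancel_left _ hp.pos]
  exact dvd_mul_right s t

theorem Nat.Prime.eq_or_eq_or_eq_of_dvd_pow_mul_pow_mul_pow {p q r s a b c : ℕ} (hp : p.Prime)
    (hq : q.Prime) (hr : r.Prime) (hs : s.Prime) (h : p ∣ q ^ a * r ^ b * s ^ c) :
    p = q ∨ p = r ∨ p = s := by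
  rcases (Nat.Prime.dvd_mul hp).mp h with h | h
  · rcases (Nat.Prime.dvd_mul hp).mp h with h | h
    · exact .inl ((Nat.prime_dvd_prime_iff_eq hp hq).mp (hp.dvd_of_dvd_pow h))
    · exact .inr (.inl ((Nat.prime_dvd_prime_iff_eq hp hr).mp (hp.dvd_of_dvd_pow h)))
  · exact .inr (.inr ((Nat.prime_dvd_prime_iff_eq hp hs).mp (hp.dvd_of_dvd_pow h)))

theorem Nat.Coprime.dvd_div_of_dvd_of_dvd {a p n : ℕ} (h : a.Coprime p) (ha : a ∣ n)
    (hp : p ∣ n) : a ∣ n / p :=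
  (Nat.dvd_div_iff_mul_dvd hp).2 (h.symm.mul_dvd_of_dvd_of_dvd hp ha)

theorem ZMod.natCast_dvd_iff_dvd_val {n d : ℕ} [NeZero n] (hd : d ∣ n) (x : ZMod n) :
    (d : ZMod n) ∣ x ↔ d ∣ x.val := by
  constructor
  · rintro ⟨c, rfl⟩
    rw [ZMod.val_mul, ZMod.val_natCast]
    exact (Nat.dvd_mod_iff hd).mpr (((Nat.dvd_mod_iff hd).mpr dvd_rfl).mul_right _)
  · rintro ⟨c, hc⟩
    rw [← ZMod.natCast_zmod_val x, hc, Nat.cast_mul]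
    exact dvd_mul_right _ _

theorem ZMod.natCast_gcd_val_dvd {n : ℕ} [NeZero n] (x : ZMod n) (m : ℕ) :
    ((x.val.gcd m : ℕ) : ZMod n) ∣ x := by
  simpa using Nat.cast_dvd_cast (α := ZMod n) (Nat.gcd_dvd_left x.val m)

theorem Polynomial.X_pow_sub_one_dvd_of_forall_cyclotomic_dvd {n : ℕ} (hn : 0 < n) {P : ℤ[X]}
    (h : ∀ d ∈ n.divisors, cyclotomic d ℤ ∣ P) : X ^ n - 1 ∣ P := by
  have hmonic : (X ^ n - 1 : ℤ[X]).Monic := by simpa using monic_X_pow_sub_C (1 : ℤ) hn.ne'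
  rw [← map_dvd_map (Int.castRingHom ℚ) Int.cast_injective hmonic, Polynomial.map_sub,
    Polynomial.map_pow, map_X, Polynomial.map_one, ← prod_cyclotomic_eq_X_pow_sub_one hn]
  refine Finset.prod_dvd_of_coprime (fun i _ j _ hij ↦ cyclotomic.isCoprime_rat hij) fun d hd ↦ ?_
  simpa using Polynomial.map_dvd (Int.castRingHom ℚ) (h d hd)

theorem fwdDiff_comm {G R : Type*} [AddCommGroup G] [AddCommGroup R] (a b : G) (f : G → R) :
    Δ_[a] (Δ_[b] f) = Δ_[b] (Δ_[a] f) := by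
  ext y
  simp only [fwdDiff, add_right_comm y a b]
  abel

theorem Set.EqOn.fwdDiff {G R : Type*} [AddCommGroup G] [AddCommGroup R] {f g : G → R} {P : Set G}
    {h : G} (hfg : EqOn f g P) (hP : ∀ y ∈ P, y + h ∈ P) : EqOn (Δ_[h] f) (Δ_[h] g) P :=
  fun y hy ↦ by simp only [_root_.fwdDiff, hfg hy, hfg (hP y hy)]

theorem fwdDiff_indicator_one_eq_zero {G R : Type*} [AddCommGroup G] [AddCommGroupWithOne R]
    {S : Set G} {h : G} (hS : ∀ y, y + h ∈ S ↔ y ∈ S) : Δ_[h] (S.indicator (1 : G → R)) = 0 := by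
  classical
  ext y
  simp only [fwdDiff, Set.indicator_apply, hS, Pi.one_apply, sub_self, Pi.zero_apply]

namespace AddMonoidAlgebra

variable {R G : Type*} [CommRing R]

theorem coeff_sum_single_one (A : Finset G) :
    ⇑(∑ a ∈ A, single a (1 : R)).coeff = (A : Set G).indicator 1 := by
  classical
  ext y
  simp [coeff_sum, Finsupp.finsetSum_apply, Finsupp.single_apply, Set.indicator_apply]

variable [AddCommGroup G]

theorem aeval_single_one_X_pow (g : G) (n : ℕ) :
    aeval (single g (1 : R)) (X ^ n : R[X]) = single (n • g) 1 := by
  rw [map_pow, aeval_X, single_pow, one_pow]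

theorem coeff_mul_single_neg_sub_one (x : AddMonoidAlgebra R G) (g : G) :
    ⇑(x * (single (-g) (1 : R) - 1)).coeff = Δ_[g] ⇑x.coeff := by
  ext y
  simp [mul_sub, coeff_sub, fwdDiff]

end AddMonoidAlgebra

open AddMonoidAlgebra in
theorem fwdDiff_fwdDiff_fwdDiff_indicator_eq_zero_of_cycDvd {M : ℕ} [NeZero M]
    {A : Finset (ZMod M)} (hA : cycDvd M M A) {a b c : ZMod M}
    (habc : ∀ s ∈ M.properDivisors, (s : ZMod M) ∣ a ∨ (s : ZMod M) ∣ b ∨ (s : ZMod M) ∣ c) :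
    Δ_[a] (Δ_[b] (Δ_[c] ((A : Set (ZMod M)).indicator (1 : ZMod M → ℤ)))) = 0 := by
  -- `X ↦ single 1 1` sends `X ^ (-d).val - 1` to `single (-d) 1 - 1`, which acts on
  -- coefficients as `Δ_[d]`.
  have hfactor : ∀ s ∈ M.properDivisors, ∀ d : ZMod M, (s : ZMod M) ∣ d →
      cyclotomic s ℤ ∣ X ^ (-d).val - 1 := by
    intro s hs d hd
    obtain ⟨k, hk⟩ :=
      (ZMod.natCast_dvd_iff_dvd_val (Nat.mem_properDivisors.1 hs).1 _).1 (dvd_neg.2 hd)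
    rw [hk, pow_mul]
    exact (cyclotomic.dvd_X_pow_sub_one s ℤ).trans (sub_one_dvd_pow_sub_one _ k)
  have hdvd : X ^ M - 1 ∣
      maskPoly M A * (X ^ (-c).val - 1) * (X ^ (-b).val - 1) * (X ^ (-a).val - 1) := by
    refine X_pow_sub_one_dvd_of_forall_cyclotomic_dvd (NeZero.pos M) fun s hs ↦ ?_
    rcases eq_or_ne s M with rfl | hsM
    · exact ((hA.mul_right _).mul_right _).mul_right _
    have hs' : s ∈ M.properDivisors := Nat.mem_properDivisors.2
      ⟨Nat.dvd_of_mem_divisors hs, (Nat.divisor_le hs).lt_of_ne hsM⟩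
    rcases habc s hs' with h | h | h
    · exact (hfactor s hs' a h).mul_left _
    · exact ((hfactor s hs' b h).mul_left _).mul_right _
    · exact (((hfactor s hs' c h).mul_left _).mul_right _).mul_right _
  obtain ⟨Q, hQ⟩ := hdvd
  have h := congrArg (fun P ↦ ⇑(aeval (single (1 : ZMod M) (1 : ℤ)) P).coeff) hQ
  simpa only [map_mul, map_sub, map_one, maskPoly, map_sum, aeval_single_one_X_pow, nsmul_one,
    ZMod.natCast_self, ZMod.natCast_zmod_val, ← one_def, sub_self, zero_mul,
    coeff_mul_single_neg_sub_one, coeff_sum_single_one, AddMonoidAlgebra.coeff_zero,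
    Finsupp.coe_zero] using h

theorem fwdDiff_fwdDiff_indicator_eqOn_zero {G : Type*} [AddCommGroup G] {A P S T : Set G}
    {a b : G} (hsplit : A ∩ P = S ∪ T) (hdisj : Disjoint S T)
    (hPa : ∀ y ∈ P, y + a ∈ P) (hPb : ∀ y ∈ P, y + b ∈ P)
    (hSa : ∀ y, y + a ∈ S ↔ y ∈ S) (hTb : ∀ y, y + b ∈ T ↔ y ∈ T) :
    EqOn (Δ_[a] (Δ_[b] (A.indicator (1 : G → ℤ)))) 0 P := by
  have hA : EqOn (A.indicator (1 : G → ℤ)) (S.indicator 1 + T.indicator 1) P := fun y hy ↦ by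
    have h := congrFun (inter_indicator_one (s := A) (t := P) (M₀ := ℤ)) y
    rwa [hsplit, indicator_union_of_disjoint hdisj, Pi.mul_apply, indicator_of_mem hy, Pi.one_apply,
      mul_one, eq_comm] at h
  intro y hy
  rw [(hA.fwdDiff hPb).fwdDiff hPa hy, fwdDiff_add, fwdDiff_add, fwdDiff_comm a b,
    fwdDiff_indicator_one_eq_zero hSa, fwdDiff_indicator_one_eq_zero hTb]
  simp [fwdDiff]

theorem mem_and_not_mem_of_fwdDiff_fwdDiff_indicator_eq_zero {G : Type*} [AddCommGroup G]
    {A : Set G} {s b c : G} (h : Δ_[c - s] (Δ_[b - s] (A.indicator (1 : G → ℤ))) s = 0)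
    (hs : s ∈ A) (hc : c ∉ A) : b ∈ A ∧ b + (c - s) ∉ A := by
  classical
  simp only [fwdDiff, add_sub_cancel, indicator_apply, hs, hc, Pi.one_apply] at h
  rw [add_sub_left_comm] at h
  by_cases hb : b ∈ A <;> by_cases hbc : b + (c - s) ∈ A <;> simp [hb, hbc] at h ⊢

theorem add_mem_gridSet_iff {M D : ℕ} {x y h : ZMod M} (hh : (D : ZMod M) ∣ h) :
    y + h ∈ gridSet M x D ↔ y ∈ gridSet M x D := by
  simp only [gridSet, mem_ofPred_eq, add_sub_right_comm, dvd_add_left hh]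

theorem add_sub_mem_gridSet {M D : ℕ} {x y s : ZMod M} (hs : s ∈ gridSet M y D) :
    s + (x - y) ∈ gridSet M x D := by
  simpa only [gridSet, mem_ofPred_eq, show s + (x - y) - x = s - y by abel] using hs

theorem gridSet_subset_gridSet {M D E : ℕ} {x y : ZMod M} (hED : E ∣ D)
    (hx : x ∈ gridSet M y E) : gridSet M x D ⊆ gridSet M y E := fun w hw ↦ by
  simpa [gridSet] using dvd_add ((Nat.cast_dvd_cast hED).trans hw) hx

theorem Fibered.add_mem_iff {M p : ℕ} {S : Set (ZMod M)} (hS : Fibered M p S) {h : ZMod M}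
    (hh : ((M / p : ℕ) : ZMod M) ∣ h) (y : ZMod M) : y + h ∈ S ↔ y ∈ S :=
  ⟨fun hy ↦ hS _ hy (by simpa [gridSet] using hh), fun hy ↦ hS y hy (by simpa [gridSet] using hh)⟩

theorem exists_fibered_decomposition {M pj pk : ℕ} (T : Set (ZMod M))
    (hT : ∀ s ∈ T, ∀ c ∈ gridSet M s (M / pj), c ∉ T →
      ∀ b ∈ gridSet M s (M / pk), b ∈ T ∧ b + (c - s) ∉ T) :
    ∃ Sj Sk : Set (ZMod M), T = Sj ∪ Sk ∧ Disjoint Sj Sk ∧ Fibered M pj Sj ∧ Fibered M pk Sk := by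
  set Sj := {a ∈ T | gridSet M a (M / pj) ⊆ T}
  refine ⟨Sj, T \ Sj, (union_sdiff_cancel (sep_subset _ _)).symm, disjoint_sdiff_right, ?_, ?_⟩
  · rintro s ⟨-, hs⟩ b hb
    exact ⟨hs hb, (gridSet_subset_gridSet dvd_rfl hb).trans hs⟩
  · rintro s ⟨hsT, hsj⟩ b hb
    obtain ⟨c, hc, hcT⟩ := not_subset.1 fun h ↦ hsj ⟨hsT, h⟩
    obtain ⟨hbT, hbcT⟩ := hT s hsT c hc hcT b hb
    exact ⟨hbT, fun hbj ↦ hbcT (hbj.2 (by simpa [gridSet] using hc))⟩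

theorem dvd_div_of_mem_properDivisors {pi pj pk ni nj nk M s : ℕ} (hpi : pi.Prime)
    (hpj : pj.Prime) (hpk : pk.Prime) (hM : M = pi ^ ni * pj ^ nj * pk ^ nk)
    (hs : s ∈ M.properDivisors) : s ∣ M / pi ∨ s ∣ M / pj ∨ s ∣ M / pk := by
  obtain ⟨p, hp, hpM, hsp⟩ := Nat.exists_prime_dvd_and_dvd_div_of_mem_properDivisors hs
  rcases hp.eq_or_eq_or_eq_of_dvd_pow_mul_pow_mul_pow hpi hpj hpk (hM ▸ hpM) with rfl | rfl | rfl
  all_goals simp [hsp]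

theorem statement9_general
    (pi pj pk : ℕ) (hpi : pi.Prime) (hpj : pj.Prime) (hpk : pk.Prime)
    (hij : pi ≠ pj) (hik : pi ≠ pk)
    (ni nj nk : ℕ) (hnj : 1 ≤ nj) (hnk : 1 ≤ nk)
    (M : ℕ) (hM : M = pi ^ ni * pj ^ nj * pk ^ nk)
    (A : Finset (ZMod M)) (hPhiM : cycDvd M M A)
    (z : ZMod M) (Sj Sk : Set (ZMod M))
    (hsplit : (A : Set (ZMod M)) ∩ gridSet M z (pi ^ ni) = Sj ∪ Sk)
    (hdisj : Disjoint Sj Sk)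
    (hfj : Fibered M pj Sj) (hfk : Fibered M pk Sk) :
    ∀ z' : ZMod M, Nat.gcd (z - z').val M = M / pi →
      ∃ Sj' Sk' : Set (ZMod M),
        (A : Set (ZMod M)) ∩ gridSet M z' (pi ^ ni) = Sj' ∪ Sk' ∧
        Disjoint Sj' Sk' ∧ Fibered M pj Sj' ∧ Fibered M pk Sk' := by
  intro z' hz'
  have : NeZero M := ⟨hM ▸ by simp [hpi.ne_zero, hpj.ne_zero, hpk.ne_zero]⟩
  have hpiM : pi ^ ni ∣ M := hM ▸ (dvd_mul_right _ _).mul_right _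
  have hpjM : pj ∣ M := hM ▸ ((dvd_pow_self pj (by omega : nj ≠ 0)).mul_left _).mul_right _
  have hpkM : pk ∣ M := hM ▸ (dvd_pow_self pk (by omega : nk ≠ 0)).mul_left _
  have hplane_j : pi ^ ni ∣ M / pj :=
    (((Nat.coprime_primes hpi hpj).2 hij).pow_left ni).dvd_div_of_dvd_of_dvd hpiM hpjM
  have hplane_k : pi ^ ni ∣ M / pk :=
    (((Nat.coprime_primes hpi hpk).2 hik).pow_left ni).dvd_div_of_dvd_of_dvd hpiM hpkM
  have hdi : ((M / pi : ℕ) : ZMod M) ∣ z - z' := hz' ▸ ZMod.natCast_gcd_val_dvd _ _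
  refine exists_fibered_decomposition _ fun s ⟨hsA, hsP⟩ c hc hcT b hb ↦ ?_
  have hcA : c ∉ A := fun h ↦ hcT ⟨h, gridSet_subset_gridSet hplane_j hsP hc⟩
  have hsquare : Δ_[c - s] (Δ_[b - s] ((A : Set (ZMod M)).indicator (1 : ZMod M → ℤ))) s = 0 := by
    have hcube := fwdDiff_fwdDiff_fwdDiff_indicator_eq_zero_of_cycDvd hPhiM fun t ht ↦ by
      rcases dvd_div_of_mem_properDivisors hpi hpj hpk hM ht with h | h | h
      exacts [.inl ((Nat.cast_dvd_cast h).trans hdi), .inr (.inl ((Nat.cast_dvd_cast h).trans hc)),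
        .inr (.inr ((Nat.cast_dvd_cast h).trans hb))]
    have hflat := fwdDiff_fwdDiff_indicator_eqOn_zero hsplit hdisj
      (fun y ↦ (add_mem_gridSet_iff ((Nat.cast_dvd_cast hplane_j).trans hc)).2)
      (fun y ↦ (add_mem_gridSet_iff ((Nat.cast_dvd_cast hplane_k).trans hb)).2)
      (hfj.add_mem_iff hc) (hfk.add_mem_iff hb)
    rw [← sub_eq_zero.1 (congrFun hcube s)]
    exact hflat (add_sub_mem_gridSet hsP)
  obtain ⟨hbA, hbcA⟩ := mem_and_not_mem_of_fwdDiff_fwdDiff_indicator_eq_zero hsquare hsA hcA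
  exact ⟨⟨hbA, gridSet_subset_gridSet hplane_k hsP hb⟩, fun h ↦ hbcA h.1⟩

/-- **Flat cuboids.** Let `M = p_i^{n_i} p_j^{n_j} p_k^{n_k}` and `A ⊆ ℤ_M`
with `Φ_M | A`. If on the plane `Π(z, p_i^{n_i})` the set `A ∩ Π` decomposes as a disjoint
union `S_j ∪ S_k` with `S_j` `M`-fibered in the `p_j` direction and `S_k` `M`-fibered in the
`p_k` direction, then the same holds on every parallel plane `Π(z', p_i^{n_i})` with
`(z - z', M) = M/p_i`. -/
theorem statement9
    (pi pj pk : ℕ) (hpi : pi.Prime) (hpj : pj.Prime) (hpk : pk.Prime)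
    (hij : pi ≠ pj) (hik : pi ≠ pk) (hjk : pj ≠ pk)
    (ni nj nk : ℕ) (hni : 1 ≤ ni) (hnj : 1 ≤ nj) (hnk : 1 ≤ nk)
    (M : ℕ) (hM : M = pi ^ ni * pj ^ nj * pk ^ nk)
    (A : Finset (ZMod M)) (hPhiM : cycDvd M M A)
    (z : ZMod M) (Sj Sk : Set (ZMod M))
    (hsplit : (A : Set (ZMod M)) ∩ gridSet M z (pi ^ ni) = Sj ∪ Sk)
    (hdisj : Disjoint Sj Sk)
    (hfj : Fibered M pj Sj) (hfk : Fibered M pk Sk) :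
    ∀ z' : ZMod M, Nat.gcd (z - z').val M = M / pi →
      ∃ Sj' Sk' : Set (ZMod M),
        (A : Set (ZMod M)) ∩ gridSet M z' (pi ^ ni) = Sj' ∪ Sk' ∧
        Disjoint Sj' Sk' ∧ Fibered M pj Sj' ∧ Fibered M pk Sk' :=
  statement9_general pi pj pk hpi hpj hpk hij hik ni nj nk hnj hnk M hM A hPhiM z Sj Sk hsplit hdisj
    hfj hfk
end

section
/- Let N = p_i^{m_i} p_j^{m_j} p_k^{m_k} with p_i, p_j, p_k distinct primes and all m_ν ≥ 1, and let S ⊆ ℤ_N satisfy Φ_N | S. (i) If p_i ≠ 2 and there is a grid Λ = Λ(x_0, D(N)) such that N/p_i ∉ Div_N(S ∩ Λ), then S ∩ Λ is N-fibered in the p_j direction or in the p_k direction. (ii) If p_i ≠ 2, p_j ≠ 2, and neither N/p_i nor N/p_j belongs to Div_N(S), then S is N-fibered in the p_k direction. -/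
open Polynomial

/-!
Write an element of a `D(N)`-grid as `s = D * u + x` and send it to the residues of `u` modulo
`p_i, p_j, p_k`. Since `Φ_N(X) = Φ_{p_i p_j p_k}(X^D)`, the counting function of the grid slice
on `ℤ_{p_i} × ℤ_{p_j} × ℤ_{p_k}` has vanishing transform at every product `αβγ` of primitive
roots of unity of orders `p_i, p_j, p_k`. Fourier inversion in each prime direction makes its
second difference in the `(p_j, p_k)`-directions constant along `p_i`-lines. As `N/p_i` is not a
difference, every `p_i`-line carries at most one point, so `p_i` times that constant lies in
`[-2, 2]`, and `p_i ≥ 3` kills it. A `0/1` array that is additive in two directions, with at most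
one `1` on each line of the third, is constant in one of the two directions: the slice is fibered
in the `p_j` or `p_k` direction. For (ii), apply (i) on the grid through each point; fibering in
the `p_j` direction would produce the difference `N/p_j`.
-/

open Finset

theorem IsPrimitiveRoot.pow_val_natCast {M : Type*} [CommMonoid M] {ζ : M} {k : ℕ}
    (h : IsPrimitiveRoot ζ k) (n : ℕ) : ζ ^ (n : ZMod k).val = ζ ^ n := by
  rw [ZMod.val_natCast, h.eq_orderOf, pow_mod_orderOf]

theorem IsPrimitiveRoot.mul_of_coprime {M : Type*} [CommMonoid M] {α β : M} {m n : ℕ}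
    (hα : IsPrimitiveRoot α m) (hβ : IsPrimitiveRoot β n) (hmn : m.Coprime n) :
    IsPrimitiveRoot (α * β) (m * n) := by
  rw [hα.eq_orderOf, hβ.eq_orderOf] at hmn ⊢
  rw [← (Commute.all α β).orderOf_mul_eq_mul_orderOf_of_coprime hmn]
  exact IsPrimitiveRoot.orderOf _

namespace ZMod

variable {m : ℕ} [Fact m.Prime]

theorem isPrimitiveRoot_stdAddChar {k : ZMod m} (hk : k ≠ 0) :
    IsPrimitiveRoot (stdAddChar k : ℂ) m := by
  refine IsPrimitiveRoot.iff_orderOf.2 (orderOf_eq_prime ?_ ?_)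
  · rw [← AddChar.map_nsmul_eq_pow, nsmul_eq_mul, natCast_self, zero_mul,
      AddChar.map_zero_eq_one]
  · rw [← AddChar.map_zero_eq_one (stdAddChar (N := m))]
    exact injective_stdAddChar.ne hk

theorem eq_of_sum_mul_pow_eq_zero {d : ZMod m → ℂ}
    (h : ∀ γ : ℂ, IsPrimitiveRoot γ m → ∑ z, d z * γ ^ z.val = 0) (z z' : ZMod m) :
    d z = d z' := by
  have hdft : ∀ k ≠ 0, dft d k = 0 := fun k hk => by
    rw [dft_apply, ← h _ (isPrimitiveRoot_stdAddChar (neg_ne_zero.2 hk))]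
    refine sum_congr rfl fun j _ => ?_
    rw [smul_eq_mul, mul_comm, ← AddChar.map_nsmul_eq_pow, nsmul_eq_mul, natCast_zmod_val,
      mul_neg]
  have hconst : ∀ j, (m : ℂ) * d j = dft d 0 := fun j => by
    have := congrFun (dft_dft d) (-j)
    rw [neg_neg, dft_apply, sum_eq_single 0 fun k _ hk => by rw [hdft k hk, smul_zero]
      (by simp)] at this
    simpa using this.symm
  exact mul_left_cancel₀ (NeZero.ne _) ((hconst z).trans (hconst z').symm)

end ZMod

section Core

variable {p q r : ℕ} [Fact p.Prime] [Fact q.Prime] [Fact r.Prime]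

theorem second_difference_eq_of_sum_mul_pow_eq_zero (f : ZMod p → ZMod q → ZMod r → ℂ)
    (h : ∀ α β γ : ℂ, IsPrimitiveRoot α p → IsPrimitiveRoot β q → IsPrimitiveRoot γ r →
      ∑ z, ∑ y, ∑ i, f i y z * (α ^ i.val * β ^ y.val * γ ^ z.val) = 0)
    (y y' : ZMod q) (z z' : ZMod r) (i i' : ZMod p) :
    f i y z - f i y' z - f i y z' + f i y' z' =
      f i' y z - f i' y' z - f i' y z' + f i' y' z' := by
  have hz : ∀ α β : ℂ, IsPrimitiveRoot α p → IsPrimitiveRoot β q →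
      ∑ y, ∑ i, (f i y z - f i y z') * (α ^ i.val * β ^ y.val) = 0 := fun α β hα hβ => by
    have := ZMod.eq_of_sum_mul_pow_eq_zero
      (d := fun z => ∑ y, ∑ i, f i y z * (α ^ i.val * β ^ y.val))
      (fun γ hγ => by rw [← h α β γ hα hβ hγ]; simp only [sum_mul, mul_assoc]) z z'
    simpa only [sub_mul, sum_sub_distrib, sub_eq_zero]
  have hy : ∀ α : ℂ, IsPrimitiveRoot α p →
      ∑ i, ((f i y z - f i y z') - (f i y' z - f i y' z')) * α ^ i.val = 0 := fun α hα => by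
    have := ZMod.eq_of_sum_mul_pow_eq_zero
      (d := fun y => ∑ i, (f i y z - f i y z') * α ^ i.val)
      (fun β hβ => by rw [← hz α β hα hβ]; simp only [sum_mul, mul_assoc]) y y'
    simpa only [sub_mul (_ - _), sum_sub_distrib, sub_eq_zero]
  linear_combination ZMod.eq_of_sum_mul_pow_eq_zero hy i i'

theorem forall_eq_and_exists_forall_eq_one_of_ne {Y Z : Type*} {a : Y → Z → ℕ}
    (ha : ∀ y z, a y z ≤ 1) (hadd : ∀ y y' z z', a y z + a y' z' = a y z' + a y' z)
    {y₁ y₂ : Y} {z₀ : Z} (h : a y₁ z₀ ≠ a y₂ z₀) :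
    (∃ y, ∀ z, a y z = 1) ∧ ∀ y z z', a y z = a y z' := by
  obtain ⟨top, bot, htop, hbot⟩ : ∃ top bot, a top z₀ = 1 ∧ a bot z₀ = 0 := by
    rcases Nat.lt_or_gt_of_ne h with hlt | hlt
    · have := ha y₂ z₀
      exact ⟨y₂, y₁, by omega, by omega⟩
    · have := ha y₁ z₀
      exact ⟨y₁, y₂, by omega, by omega⟩
  have hrow : ∀ z, a top z = 1 := fun z => by
    have := hadd top bot z z₀
    have := ha top z
    omega
  refine ⟨⟨top, hrow⟩, fun y z z' => ?_⟩
  have := hadd y top z z'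
  rw [hrow, hrow] at this
  omega

theorem forall_eq_or_forall_eq_of_add_eq_add {ι Y Z : Type*} [Fintype ι] [DecidableEq ι]
    {a : ι → Y → Z → ℕ} (hsum : ∀ y z, ∑ i, a i y z ≤ 1)
    (hadd : ∀ i y y' z z', a i y z + a i y' z' = a i y z' + a i y' z) :
    (∀ i y y' z, a i y z = a i y' z) ∨ (∀ i y z z', a i y z = a i y z') := by
  have hle : ∀ i y z, a i y z ≤ 1 := fun i y z =>
    (single_le_sum (fun _ _ => Nat.zero_le _) (mem_univ i)).trans (hsum y z)
  by_contra! h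
  obtain ⟨⟨i, y₁, y₂, z₀, hi⟩, ⟨j, y₀, z₁, z₂, hj⟩⟩ := h
  obtain ⟨⟨y, hy⟩, hi_const⟩ := forall_eq_and_exists_forall_eq_one_of_ne (hle i) (hadd i) hi
  obtain ⟨⟨z, hz⟩, -⟩ := forall_eq_and_exists_forall_eq_one_of_ne (a := fun z y => a j y z)
    (fun z y => hle j y z) (fun z z' y y' => by have := hadd j y y' z z'; omega) hj
  obtain rfl | hij := eq_or_ne i j
  · exact hj (hi_const y₀ z₁ z₂)
  · have := sum_le_sum_of_subset (f := fun k => a k y z) (subset_univ {i, j})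
    rw [sum_pair hij, hy, hz] at this
    have := hsum y z
    omega

theorem forall_eq_or_forall_eq_of_sum_mul_pow_eq_zero (hp2 : p ≠ 2)
    (a : ZMod p → ZMod q → ZMod r → ℕ) (hline : ∀ y z, ∑ i, a i y z ≤ 1)
    (hvan : ∀ α β γ : ℂ, IsPrimitiveRoot α p → IsPrimitiveRoot β q → IsPrimitiveRoot γ r →
      ∑ z, ∑ y, ∑ i, (a i y z : ℂ) * (α ^ i.val * β ^ y.val * γ ^ z.val) = 0) :
    (∀ i y y' z, a i y z = a i y' z) ∨ (∀ i y z z', a i y z = a i y z') := by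
  refine forall_eq_or_forall_eq_of_add_eq_add hline fun i y y' z z' => ?_
  set w : ZMod p → ℤ := fun i => a i y z - a i y' z - a i y z' + a i y' z'
  have hconst : ∀ i', w i' = w i := fun i' => by
    have h := second_difference_eq_of_sum_mul_pow_eq_zero _ hvan y y' z z' i' i
    simp only [w]
    exact_mod_cast h
  have hsum : (p : ℤ) * w i =
      ∑ i, (a i y z : ℤ) - ∑ i, (a i y' z : ℤ) - ∑ i, (a i y z' : ℤ) + ∑ i, (a i y' z' : ℤ) := by
    calc (p : ℤ) * w i = ∑ i', w i' := by simp [hconst, ZMod.card]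
      _ = _ := by simp [w, sum_add_distrib, sum_sub_distrib]
  have hline' : ∀ y z, 0 ≤ ∑ i, (a i y z : ℤ) ∧ ∑ i, (a i y z : ℤ) ≤ 1 := fun y z =>
    ⟨by positivity, by exact_mod_cast hline y z⟩
  have hp3 : (3 : ℤ) ≤ p := by
    have := (Fact.out : p.Prime).two_le
    omega
  have := hline' y z
  have := hline' y' z
  have := hline' y z'
  have := hline' y' z'
  have hw0 : w i = 0 := by
    rcases lt_trichotomy (w i) 0 with hneg | h0 | hpos
    · nlinarith
    · exact h0
    · nlinarith
  simp only [w] at hw0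
  omega

end Core

section Expand

variable {R : Type*} [CommSemiring R] {D : ℕ}

theorem coeff_sum_X_pow_mul_expand (U : ℕ → R[X]) {x : ℕ} (hx : x < D) (e : ℕ) :
    (∑ x' ∈ range D, X ^ x' * expand R D (U x')).coeff (D * e + x) = (U x).coeff e := by
  have hD : 0 < D := by omega
  rw [finsetSum_coeff, sum_eq_single x]
  · rw [coeff_X_pow_mul', if_pos (by omega), Nat.add_sub_cancel, coeff_expand hD,
      if_pos (dvd_mul_right D e), Nat.mul_div_cancel_left e hD]
  · intro x' hx' hne
    rw [coeff_X_pow_mul', coeff_expand hD]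
    split_ifs with hle hdvd
    · have := (Nat.modEq_iff_dvd' hle).2 hdvd
      rw [Nat.ModEq, Nat.mul_add_mod, Nat.mod_eq_of_lt hx, Nat.mod_eq_of_lt (mem_range.1 hx')]
        at this
      exact absurd this hne
    all_goals rfl
  · exact fun h => absurd (mem_range.2 hx) h

theorem exists_eq_sum_X_pow_mul_expand (hD : 0 < D) (Q : R[X]) :
    ∃ V : ℕ → R[X], Q = ∑ x ∈ range D, X ^ x * expand R D (V x) := by
  induction Q using Polynomial.induction_on' with
  | add f g hf hg =>
    obtain ⟨V, rfl⟩ := hf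
    obtain ⟨W, rfl⟩ := hg
    exact ⟨V + W, by simp only [Pi.add_apply, map_add, mul_add, sum_add_distrib]⟩
  | monomial n a =>
    refine ⟨Pi.single (n % D) (monomial (n / D) a), ?_⟩
    rw [sum_eq_single_of_mem _ (mem_range.2 (Nat.mod_lt n hD)) fun x _ hx => by simp [hx],
      Pi.single_eq_same, expand_monomial, X_pow_mul_monomial, Nat.div_add_mod']

theorem sum_X_pow_eq_sum_X_pow_mul_expand {ι : Type*} (hD : 0 < D) (s : Finset ι) (e : ι → ℕ) :
    ∑ i ∈ s, (X : R[X]) ^ e i =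
      ∑ x ∈ range D, X ^ x * expand R D (∑ i ∈ s with e i % D = x, X ^ (e i / D)) := by
  rw [← sum_fiberwise_of_maps_to (g := fun i => e i % D) fun i _ => mem_range.2 (Nat.mod_lt _ hD)]
  refine sum_congr rfl fun x _ => ?_
  rw [map_sum, mul_sum]
  refine sum_congr rfl fun i hi => ?_
  rw [map_pow, expand_X, ← pow_mul, ← pow_add, ← (mem_filter.1 hi).2, Nat.mod_add_div]

theorem dvd_of_expand_dvd_sum_X_pow_mul_expand (hD : 0 < D) {F : R[X]} {U : ℕ → R[X]}
    (h : expand R D F ∣ ∑ x ∈ range D, X ^ x * expand R D (U x)) {x : ℕ} (hx : x < D) :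
    F ∣ U x := by
  obtain ⟨Q, hQ⟩ := h
  obtain ⟨V, rfl⟩ := exists_eq_sum_X_pow_mul_expand hD Q
  refine ⟨V x, Polynomial.ext fun e => ?_⟩
  rw [← coeff_sum_X_pow_mul_expand U hx, hQ, mul_sum,
    ← coeff_sum_X_pow_mul_expand (fun x => F * V x) hx]
  simp only [map_mul, mul_left_comm]

end Expand

theorem expand_cyclotomic_of_primeFactors_dvd (R : Type*) [CommRing R] {D : ℕ} (hD : 0 < D) :
    ∀ {n : ℕ}, (∀ ℓ, ℓ.Prime → ℓ ∣ D → ℓ ∣ n) →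
      expand R D (cyclotomic n R) = cyclotomic (n * D) R := by
  induction D using Nat.recOnMul with
  | zero => omega
  | one => simp
  | prime ℓ hℓ => exact fun h => cyclotomic_expand_eq_cyclotomic hℓ (h ℓ hℓ dvd_rfl) R
  | mul a b iha ihb =>
    intro n h
    have ha : 0 < a := Nat.pos_of_mul_pos_right hD
    have hb : 0 < b := Nat.pos_of_mul_pos_left hD
    rw [← expand_expand, ihb hb fun ℓ hℓ hℓb => h ℓ hℓ (dvd_mul_of_dvd_right hℓb a),
      iha ha fun ℓ hℓ hℓa => dvd_mul_of_dvd_left (h ℓ hℓ (dvd_mul_of_dvd_left hℓa b)) b,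
      mul_assoc, mul_comm b a]

namespace ZMod
variable {N : ℕ} [NeZero N] {d : ℕ}

theorem natCast_dvd_iff_dvd_val_s10 (hd : d ∣ N) (x : ZMod N) : (d : ZMod N) ∣ x ↔ d ∣ x.val := by
  constructor
  · rintro ⟨t, rfl⟩
    rw [val_mul, val_natCast, Nat.dvd_mod_iff hd]
    exact ((Nat.dvd_mod_iff hd).2 dvd_rfl).mul_right _
  · rintro ⟨k, hk⟩
    rw [← natCast_zmod_val x, hk, Nat.cast_mul]
    exact dvd_mul_right _ _

theorem natCast_dvd_sub_iff_modEq (hd : d ∣ N) (a b : ZMod N) :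
    (d : ZMod N) ∣ a - b ↔ a.val ≡ b.val [MOD d] := by
  rw [natCast_dvd_iff_dvd_val_s10 hd, ← natCast_eq_zero_iff, ← cast_eq_val, cast_sub hd, cast_eq_val,
    cast_eq_val, sub_eq_zero, natCast_eq_natCast_iff]

theorem gcd_val_eq_div_of_dvd {p : ℕ} (hp : p.Prime) (hpN : p ∣ N) {a : ZMod N}
    (ha : ((N / p : ℕ) : ZMod N) ∣ a) (ha0 : a ≠ 0) : Nat.gcd a.val N = N / p := by
  have hNp : N / p ∣ N := Nat.div_dvd_of_dvd hpN
  obtain ⟨e, he⟩ := Nat.dvd_gcd ((natCast_dvd_iff_dvd_val_s10 hNp a).1 ha) hNp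
  have he_dvd : e ∣ p := by
    refine Nat.dvd_of_mul_dvd_mul_left (Nat.pos_of_dvd_of_pos hNp (NeZero.pos N)) ?_
    rw [← he, Nat.div_mul_cancel hpN]
    exact Nat.gcd_dvd_right _ _
  rcases hp.eq_one_or_self_of_dvd e he_dvd with rfl | rfl
  · rw [he, mul_one]
  · have hN : N ∣ a.val := by
      have := Nat.gcd_dvd_left a.val N
      rwa [he, Nat.div_mul_cancel hpN] at this
    exact absurd ((val_eq_zero a).1 (Nat.eq_zero_of_dvd_of_lt hN (val_lt a))) ha0

variable {D : ℕ}

theorem natCast_mul_dvd_sub_iff_modEq (h : D * d ∣ N) {a b : ZMod N}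
    (hab : a.val ≡ b.val [MOD D]) :
    ((D * d : ℕ) : ZMod N) ∣ a - b ↔ a.val / D ≡ b.val / D [MOD d] := by
  have hD : 0 < D := Nat.pos_of_ne_zero fun hD => NeZero.ne N (by simpa [hD] using h)
  rw [natCast_dvd_sub_iff_modEq h, Nat.ModEq, Nat.ModEq, Nat.mod_mul, Nat.mod_mul,
    (hab : a.val % D = b.val % D), Nat.add_left_cancel_iff, Nat.mul_left_cancel_iff hD]

theorem natCast_mul_mul_dvd_sub_iff {m n : ℕ} (hmn : m.Coprime n) (h : D * (m * n) ∣ N)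
    {a b : ZMod N} (hab : a.val ≡ b.val [MOD D]) :
    ((D * (m * n) : ℕ) : ZMod N) ∣ a - b ↔
      ((a.val / D : ℕ) : ZMod m) = (b.val / D : ℕ) ∧
        ((a.val / D : ℕ) : ZMod n) = (b.val / D : ℕ) := by
  rw [natCast_mul_dvd_sub_iff_modEq h hab, ← Nat.modEq_and_modEq_iff_modEq_mul hmn,
    natCast_eq_natCast_iff, natCast_eq_natCast_iff]

end ZMod

/-- For `N = D * (p * q * r)`, an element `s = D * u + x` (`x < D`) of a `D`-grid is sent to the
residues of `u`, i.e. to the image of `u` under `ℤ_{pqr} ≅ ℤ_p × ℤ_q × ℤ_r`. -/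
def gridCoords (D p q r : ℕ) {N : ℕ} (s : ZMod N) : ZMod p × ZMod q × ZMod r :=
  ((s.val / D : ℕ), (s.val / D : ℕ), (s.val / D : ℕ))

section Grid

variable {N D p q r : ℕ}

theorem eq_of_gridCoords_eq [NeZero N] (hpq : p.Coprime q) (hpqr : (p * q).Coprime r)
    (hN : N = D * (p * q * r)) {a b : ZMod N} (hab : a.val ≡ b.val [MOD D])
    (h : gridCoords D p q r a = gridCoords D p q r b) : a = b := by
  simp only [gridCoords, Prod.mk.injEq, ZMod.natCast_eq_natCast_iff] at h
  have := (ZMod.natCast_mul_mul_dvd_sub_iff hpqr (hN ▸ dvd_rfl) hab).2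
    ⟨(ZMod.natCast_eq_natCast_iff _ _ _).2 ((Nat.modEq_and_modEq_iff_modEq_mul hpq).1 ⟨h.1, h.2.1⟩),
      (ZMod.natCast_eq_natCast_iff _ _ _).2 h.2.2⟩
  rwa [← hN, ZMod.natCast_self, zero_dvd_iff, sub_eq_zero] at this

theorem sum_card_gridCoords_le_one [NeZero N] [Fact p.Prime] (hqr : q.Coprime r)
    (hN : N = D * (p * q * r)) {A : Finset (ZMod N)} (hA : ∀ s ∈ A, ∀ t ∈ A, s.val ≡ t.val [MOD D])
    (hdiv : N / p ∉ DivSet N N A) (y : ZMod q) (z : ZMod r) :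
    ∑ i, #{s ∈ A | gridCoords D p q r s = (i, y, z)} ≤ 1 := by
  have hp : p.Prime := Fact.out
  have hNp : N / p = D * (q * r) := Nat.div_eq_of_eq_mul_left hp.pos (by rw [hN]; ring)
  calc ∑ i, #{s ∈ A | gridCoords D p q r s = (i, y, z)}
      = #{s ∈ A | (gridCoords D p q r s).2 = (y, z)} := by
        rw [card_eq_sum_card_fiberwise (f := fun s => (gridCoords D p q r s).1) (t := univ)
          fun _ _ => mem_coe.2 (mem_univ _)]
        simp only [filter_filter, Prod.ext_iff, and_comm]
    _ ≤ 1 := card_le_one.2 fun s hs t ht => by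
        rw [mem_filter] at hs ht
        by_contra hst
        refine hdiv ⟨s, hs.1, t, ht.1, ZMod.gcd_val_eq_div_of_dvd hp ⟨D * (q * r), by rw [hN]; ring⟩
          ?_ (sub_ne_zero.2 hst)⟩
        rw [hNp, ZMod.natCast_mul_mul_dvd_sub_iff hqr ⟨p, by rw [hN]; ring⟩ (hA s hs.1 t ht.1)]
        simpa only [gridCoords, Prod.mk.injEq] using hs.2.trans ht.2.symm

theorem sum_card_gridCoords_mul_pow_eq_zero [NeZero p] [NeZero q] [NeZero r]
    (hpq : p.Coprime q) (hpr : p.Coprime r) (hqr : q.Coprime r) {A : Finset (ZMod N)}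
    (hA : cyclotomic (p * q * r) ℤ ∣ ∑ s ∈ A, X ^ (s.val / D)) {α β γ : ℂ}
    (hα : IsPrimitiveRoot α p) (hβ : IsPrimitiveRoot β q) (hγ : IsPrimitiveRoot γ r) :
    ∑ z, ∑ y, ∑ i, (#{s ∈ A | gridCoords D p q r s = (i, y, z)} : ℂ) *
      (α ^ i.val * β ^ y.val * γ ^ z.val) = 0 := by
  have hω : IsPrimitiveRoot (α * β * γ) (p * q * r) :=
    (hα.mul_of_coprime hβ hpq).mul_of_coprime hγ (Nat.Coprime.mul_left hpr hqr)
  have hroot : aeval (α * β * γ) (cyclotomic (p * q * r) ℤ) = 0 := by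
    rw [aeval_def, eval₂_eq_eval_map, map_cyclotomic]
    exact hω.isRoot_cyclotomic (NeZero.pos _)
  obtain ⟨g, hg⟩ := hA
  have hvan := congrArg (aeval (α * β * γ)) hg
  rw [map_mul, hroot, zero_mul, map_sum] at hvan
  rw [← hvan]
  calc _ = ∑ t, (#{s ∈ A | gridCoords D p q r s = t} : ℂ) *
          (α ^ t.1.val * β ^ t.2.1.val * γ ^ t.2.2.val) := by
        rw [Fintype.sum_prod_type_right, Fintype.sum_prod_type_right]
    _ = ∑ t, ∑ s ∈ A with gridCoords D p q r s = t,
          α ^ t.1.val * β ^ t.2.1.val * γ ^ t.2.2.val := by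
        simp only [sum_const, nsmul_eq_mul]
    _ = ∑ s ∈ A, aeval (α * β * γ) (X ^ (s.val / D)) := by
        rw [sum_fiberwise']
        refine sum_congr rfl fun s _ => ?_
        simp only [gridCoords, hα.pow_val_natCast, hβ.pow_val_natCast, hγ.pow_val_natCast,
          map_pow, aeval_X, mul_pow]

theorem cyclotomic_dvd_sum_X_pow_div {n : ℕ} (hD : 0 < D) (hN : N = D * n)
    (hDn : ∀ ℓ, ℓ.Prime → ℓ ∣ D → ℓ ∣ n) {S : Finset (ZMod N)} (hS : cycDvd N N S) {x : ℕ}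
    (hx : x < D) : cyclotomic n ℤ ∣ ∑ s ∈ S with s.val % D = x, X ^ (s.val / D) := by
  refine dvd_of_expand_dvd_sum_X_pow_mul_expand (R := ℤ) hD
    (U := fun x => ∑ s ∈ S with s.val % D = x, X ^ (s.val / D)) ?_ hx
  rw [expand_cyclotomic_of_primeFactors_dvd ℤ hD hDn, mul_comm, ← hN,
    ← sum_X_pow_eq_sum_X_pow_mul_expand hD]
  exact hS

theorem fibered_of_card_gridCoords_eq [NeZero N] [Fact q.Prime] (hpq : p.Coprime q)
    (hpr : p.Coprime r) (hpqr : (p * q).Coprime r) (hN : N = D * (p * q * r))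
    {A : Finset (ZMod N)} (hA : ∀ s ∈ A, ∀ t ∈ A, s.val ≡ t.val [MOD D])
    (hy : ∀ i y y' z, #{s ∈ A | gridCoords D p q r s = (i, y, z)} =
      #{s ∈ A | gridCoords D p q r s = (i, y', z)}) :
    Fibered N q A := by
  intro s hs t ht
  have hNq : N / q = D * (p * r) :=
    Nat.div_eq_of_eq_mul_left (Fact.out : q.Prime).pos (by rw [hN]; ring)
  change ((N / q : ℕ) : ZMod N) ∣ t - s at ht
  rw [hNq] at ht
  have hts : t.val ≡ s.val [MOD D] :=
    (ZMod.natCast_dvd_sub_iff_modEq (hN ▸ dvd_mul_right D _) t s).1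
      ((Nat.cast_dvd_cast (dvd_mul_right D _)).trans ht)
  obtain ⟨hp_eq, hr_eq⟩ := (ZMod.natCast_mul_mul_dvd_sub_iff hpr ⟨q, by rw [hN]; ring⟩ hts).1 ht
  have hκ : gridCoords D p q r t = ((gridCoords D p q r s).1, (gridCoords D p q r t).2.1,
      (gridCoords D p q r s).2.2) := by
    simp [gridCoords, hp_eq, hr_eq]
  obtain ⟨s', hs'⟩ : {s' ∈ A | gridCoords D p q r s' = gridCoords D p q r t}.Nonempty := by
    rw [← card_pos, hκ, hy]
    exact card_pos.2 ⟨s, mem_filter.2 ⟨hs, rfl⟩⟩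
  rw [mem_filter] at hs'
  obtain rfl := eq_of_gridCoords_eq hpq hpqr hN ((hA s' hs'.1 s hs).trans hts.symm) hs'.2
  exact hs'.1

theorem fibered_or_fibered_of_div_not_mem [NeZero N] [Fact p.Prime] [Fact q.Prime] [Fact r.Prime]
    (hp2 : p ≠ 2) (hpq : p ≠ q) (hpr : p ≠ r) (hqr : q ≠ r) (hD : 0 < D)
    (hN : N = D * (p * q * r)) (hDpqr : ∀ ℓ, ℓ.Prime → ℓ ∣ D → ℓ ∣ p * q * r)
    {S : Finset (ZMod N)} (hS : cycDvd N N S) (x0 : ZMod N)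
    (hdiv : N / p ∉ DivSet N N (↑S ∩ gridSet N x0 D)) :
    Fibered N q (↑S ∩ gridSet N x0 D) ∨ Fibered N r (↑S ∩ gridSet N x0 D) := by
  have hp : p.Prime := Fact.out
  have hq : q.Prime := Fact.out
  have hr : r.Prime := Fact.out
  have cpq := (Nat.coprime_primes hp hq).2 hpq
  have cpr := (Nat.coprime_primes hp hr).2 hpr
  have cqr := (Nat.coprime_primes hq hr).2 hqr
  set A := S.filter fun s => s.val % D = x0.val % D
  have hA : ∀ s ∈ A, ∀ t ∈ A, s.val ≡ t.val [MOD D] := fun s hs t ht =>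
    (mem_filter.1 hs).2.trans (mem_filter.1 ht).2.symm
  have hSA : (↑S ∩ gridSet N x0 D : Set (ZMod N)) = A := by
    ext t
    simp [A, gridSet, ZMod.natCast_dvd_sub_iff_modEq (hN ▸ dvd_mul_right D _), Nat.ModEq]
  rw [hSA] at hdiv ⊢
  obtain hy | hz := forall_eq_or_forall_eq_of_sum_mul_pow_eq_zero hp2
    (fun i y z => #{s ∈ A | gridCoords D p q r s = (i, y, z)})
    (sum_card_gridCoords_le_one cqr hN hA hdiv)
    (fun α β γ hα hβ hγ => sum_card_gridCoords_mul_pow_eq_zero cpq cpr cqr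
      (cyclotomic_dvd_sum_X_pow_div hD hN hDpqr hS (Nat.mod_lt _ hD)) hα hβ hγ)
  · exact Or.inl (fibered_of_card_gridCoords_eq cpq cpr (cpr.mul_left cqr) hN hA hy)
  · have hswap : ∀ (s : ZMod N) i y z,
        gridCoords D p r q s = (i, z, y) ↔ gridCoords D p q r s = (i, y, z) := by
      simp only [gridCoords, Prod.mk.injEq]
      tauto
    refine Or.inr (fibered_of_card_gridCoords_eq cpr cpq (cpq.mul_left cqr.symm)
      (by rw [hN]; ring) hA fun i z z' y => ?_)
    simp only [hswap]
    exact hz i y z z'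

end Grid

theorem divSet_mono {M N : ℕ} {P Q : Set (ZMod M)} (h : P ⊆ Q) : DivSet M N P ⊆ DivSet M N Q :=
  fun _ ⟨s, hs, s', hs', hg⟩ => ⟨s, h hs, s', h hs', hg⟩

theorem div_mem_divSet_of_fibered {N ℓ : ℕ} [NeZero N] (hℓ : ℓ.Prime) (hℓN : ℓ ∣ N)
    {P : Set (ZMod N)} (hP : Fibered N ℓ P) {s : ZMod N} (hs : s ∈ P) :
    N / ℓ ∈ DivSet N N P := by
  have hne : ((N / ℓ : ℕ) : ZMod N) ≠ 0 := by
    rw [Ne, ZMod.natCast_eq_zero_iff]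
    exact Nat.not_dvd_of_pos_of_lt (Nat.div_pos (Nat.le_of_dvd (NeZero.pos N) hℓN) hℓ.pos)
      (Nat.div_lt_self (NeZero.pos N) hℓ.one_lt)
  refine ⟨s + (N / ℓ : ℕ), hP s hs (by simp [gridSet]), s, hs, ?_⟩
  rw [add_sub_cancel_left]
  exact ZMod.gcd_val_eq_div_of_dvd hℓ hℓN dvd_rfl hne

/-- **Missing top difference implies fibering.** Let
`N = p_i^{m_i} p_j^{m_j} p_k^{m_k}` and `S ⊆ ℤ_N` with `Φ_N | S`.
(i) If `p_i ≠ 2` and `N/p_i ∉ Div_N(S ∩ Λ)` for some `D(N)`-grid `Λ`, then `S ∩ Λ` is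
`N`-fibered in the `p_j` or the `p_k` direction.
(ii) If `p_i, p_j ≠ 2` and `N/p_i, N/p_j ∉ Div_N(S)`, then `S` is `N`-fibered in the `p_k`
direction. -/
theorem statement10
    (pi pj pk : ℕ) (hpi : pi.Prime) (hpj : pj.Prime) (hpk : pk.Prime)
    (hij : pi ≠ pj) (hik : pi ≠ pk) (hjk : pj ≠ pk)
    (mi mj mk : ℕ) (hmi : 1 ≤ mi) (hmj : 1 ≤ mj) (hmk : 1 ≤ mk)
    (N : ℕ) (hN : N = pi ^ mi * pj ^ mj * pk ^ mk)
    (S : Finset (ZMod N)) (hPhiN : cycDvd N N S) :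
    ((pi ≠ 2 → ∀ x0 : ZMod N,
      N / pi ∉ DivSet N N
        ((S : Set (ZMod N)) ∩ gridSet N x0 (pi ^ (mi - 1) * pj ^ (mj - 1) * pk ^ (mk - 1))) →
      (Fibered N pj
          ((S : Set (ZMod N)) ∩ gridSet N x0 (pi ^ (mi - 1) * pj ^ (mj - 1) * pk ^ (mk - 1))) ∨
       Fibered N pk
          ((S : Set (ZMod N)) ∩ gridSet N x0 (pi ^ (mi - 1) * pj ^ (mj - 1) * pk ^ (mk - 1)))))
    ∧ (pi ≠ 2 → pj ≠ 2 →
        N / pi ∉ DivSet N N (S : Set (ZMod N)) →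
        N / pj ∉ DivSet N N (S : Set (ZMod N)) →
        Fibered N pk (S : Set (ZMod N)))) := by
  have := Fact.mk hpi
  have := Fact.mk hpj
  have := Fact.mk hpk
  set D := pi ^ (mi - 1) * pj ^ (mj - 1) * pk ^ (mk - 1)
  have hND : N = D * (pi * pj * pk) := by
    rw [hN, ← pow_sub_one_mul (by omega : mi ≠ 0), ← pow_sub_one_mul (by omega : mj ≠ 0),
      ← pow_sub_one_mul (by omega : mk ≠ 0)]
    ring
  have : NeZero N := ⟨by simp [hN, hpi.ne_zero, hpj.ne_zero, hpk.ne_zero]⟩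
  have hDprimes : ∀ ℓ, ℓ.Prime → ℓ ∣ D → ℓ ∣ pi * pj * pk := fun ℓ hℓ hℓD => by
    simp only [D, hℓ.dvd_mul] at hℓD ⊢
    rcases hℓD with (h | h) | h <;> simp [hℓ.dvd_of_dvd_pow h]
  have part_i := fun hpi2 x0 => fibered_or_fibered_of_div_not_mem hpi2 hij hik hjk
    (Nat.pos_of_ne_zero (by simp [D, hpi.ne_zero, hpj.ne_zero, hpk.ne_zero])) hND hDprimes
    hPhiN x0
  refine ⟨part_i, fun hpi2 _ hdi hdj s hs => ?_⟩
  have hsΛ : s ∈ (S : Set (ZMod N)) ∩ gridSet N s D := ⟨hs, by simp [gridSet]⟩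
  rcases part_i hpi2 s fun h => hdi (divSet_mono Set.inter_subset_left h) with hfj | hfk
  · have hpjN : pj ∣ N := by
      rw [hN]
      exact ((dvd_pow_self pj (by omega)).mul_left _).mul_right _
    exact absurd (divSet_mono Set.inter_subset_left (div_mem_divSet_of_fibered hpj hpjN hfj hsΛ))
      hdj
  · exact fun t ht => (hfk s hsΛ ht).1
end
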